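/- arXiv:1604.08844 — 4 statements merged into one kernel-verified Lean document; each statement's English description precedes it below -/
import Mathlib

section
/- Let 1 ≤ i ≤ n−1 and suppose a_i ≥ 1. A point v ∈ U is a vertex of the FFLV polytope P_{a_iω_i} if and only if v = a_i·χ_A for some ≼-antichain A ⊆ Q_i. -/
open Finset

/-- Valid index pairs `1 ≤ i < j ≤ n` for type `A`. -/
def ValidPair (n : ℕ) (p : ℕ × ℕ) : Prop :=
  1 ≤ p.1 ∧ p.1 < p.2 ∧ p.2 ≤ n

/-- One step of a Dyck path: move to the upper-right or the bottom-right neighbour. -/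
def PathStep (p q : ℕ × ℕ) : Prop :=
  q = (p.1 + 1, p.2) ∨ q = (p.1, p.2 + 1)

/-- A (type `A`) Dyck path. -/
def IsDyckPath (n : ℕ) (d : List (ℕ × ℕ)) : Prop :=
  d ≠ [] ∧ (∀ p ∈ d, ValidPair n p) ∧
  (∃ i, d.head? = some (i, i + 1)) ∧
  (∃ i, d.getLast? = some (i, i + 1)) ∧
  List.Chain' PathStep d

/-- `S(x,d)`, the sum of the coordinates of `x` along the path `d`. -/
noncomputable def Sval (x : ℕ × ℕ → ℝ) (d : List (ℕ × ℕ)) : ℝ :=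
  (d.map x).sum

/-- `M(λ,d) = a_{i₁} + a_{i₁+1} + … + a_{i_N}` for the weight with coordinates `a`. -/
def Mval (a : ℕ → ℕ) (d : List (ℕ × ℕ)) : ℕ :=
  ∑ i ∈ (d.map Prod.fst).toFinset, a i

/-- The FFLV polytope `P_λ` of the `sl_n`-weight with fundamental-weight coordinates `a`,
realized inside the functions `ℕ × ℕ → ℝ` supported on valid pairs. -/
def FFLV (n : ℕ) (a : ℕ → ℕ) : Set (ℕ × ℕ → ℝ) :=
  {x | (∀ p, ¬ ValidPair n p → x p = 0) ∧ (∀ p, 0 ≤ x p) ∧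
       ∀ d, IsDyckPath n d → Sval x d ≤ (Mval a d : ℝ)}

/-- The partial order `≼` on pairs. -/
def preceq (p q : ℕ × ℕ) : Prop := p.1 ≤ q.1 ∧ p.2 ≤ q.2

/-- The set `Q_i = {(k,l) : 1 ≤ k ≤ i, i+1 ≤ l ≤ n}`. -/
def Qset (n i : ℕ) : Set (ℕ × ℕ) :=
  {p | 1 ≤ p.1 ∧ p.1 ≤ i ∧ i + 1 ≤ p.2 ∧ p.2 ≤ n}

/-- The indicator vector `χ_A` of a set of pairs. -/
noncomputable def chi (A : Set (ℕ × ℕ)) : ℕ × ℕ → ℝ :=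
  A.indicator fun _ => (1 : ℝ)

namespace FFLVaux

def vseg (k l₁ l₂ : ℕ) : List (ℕ × ℕ) := (List.range (l₂ + 1 - l₁)).map fun t => (k, l₁ + t)
def hseg (k₁ k₂ l : ℕ) : List (ℕ × ℕ) := (List.range (k₂ + 1 - k₁)).map fun t => (k₁ + t, l)

lemma range_map_head {α : Type*} (f : ℕ → α) {m : ℕ} (h : 0 < m) :
    ((List.range m).map f).head? = some (f 0) := by
  cases m with
  | zero => omega
  | succ k => rw [List.range_succ_eq_map]; simp

lemma range_map_getLast {α : Type*} (f : ℕ → α) {m : ℕ} (h : 0 < m) :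
    ((List.range m).map f).getLast? = some (f (m - 1)) := by
  cases m with
  | zero => omega
  | succ k => rw [List.range_succ, List.map_append]; simp

lemma range_map_chain' {α : Type*} {R : α → α → Prop} (f : ℕ → α) {m : ℕ}
    (h : ∀ t, t + 1 < m → R (f t) (f (t + 1))) : List.Chain' R ((List.range m).map f) := by
  unfold List.Chain'
  rw [List.isChain_map]
  cases m with
  | zero => simp
  | succ k =>
    rw [List.isChain_range_succ]
    intro t ht
    exact h t (by omega)

lemma range_map_mem {α : Type*} {f : ℕ → α} {m : ℕ} {r : α} :
    r ∈ (List.range m).map f ↔ ∃ t, t < m ∧ f t = r := by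
  simp [List.mem_map, List.mem_range]

lemma vseg_head {k l₁ l₂ : ℕ} (h : l₁ ≤ l₂) : (vseg k l₁ l₂).head? = some (k, l₁) := by
  rw [vseg, range_map_head _ (by omega)]
  simp

lemma vseg_getLast {k l₁ l₂ : ℕ} (h : l₁ ≤ l₂) : (vseg k l₁ l₂).getLast? = some (k, l₂) := by
  rw [vseg, range_map_getLast _ (by omega)]
  congr 2
  omega

lemma vseg_chain' (k l₁ l₂ : ℕ) : List.Chain' PathStep (vseg k l₁ l₂) := by
  apply range_map_chain'
  intro t _
  exact Or.inr rfl

lemma vseg_mem {k l₁ l₂ : ℕ} {r : ℕ × ℕ} (h : r ∈ vseg k l₁ l₂) :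
    r.1 = k ∧ l₁ ≤ r.2 ∧ r.2 ≤ l₂ := by
  rw [vseg, range_map_mem] at h
  obtain ⟨t, ht, rfl⟩ := h
  exact ⟨rfl, by omega, by omega⟩

lemma mem_vseg {k l₁ l₂ l : ℕ} (h1 : l₁ ≤ l) (h2 : l ≤ l₂) : (k, l) ∈ vseg k l₁ l₂ := by
  rw [vseg, range_map_mem]
  exact ⟨l - l₁, by omega, by simp; omega⟩

lemma vseg_empty {k l₁ l₂ : ℕ} (h : l₂ < l₁) : vseg k l₁ l₂ = [] := by
  rw [vseg, show l₂ + 1 - l₁ = 0 from by omega]; rfl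

lemma hseg_head {k₁ k₂ l : ℕ} (h : k₁ ≤ k₂) : (hseg k₁ k₂ l).head? = some (k₁, l) := by
  rw [hseg, range_map_head _ (by omega)]
  simp

lemma hseg_getLast {k₁ k₂ l : ℕ} (h : k₁ ≤ k₂) : (hseg k₁ k₂ l).getLast? = some (k₂, l) := by
  rw [hseg, range_map_getLast _ (by omega)]
  congr 2
  omega

lemma hseg_chain' (k₁ k₂ l : ℕ) : List.Chain' PathStep (hseg k₁ k₂ l) := by
  apply range_map_chain'
  intro t _
  exact Or.inl rfl

lemma hseg_mem {k₁ k₂ l : ℕ} {r : ℕ × ℕ} (h : r ∈ hseg k₁ k₂ l) :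
    k₁ ≤ r.1 ∧ r.1 ≤ k₂ ∧ r.2 = l := by
  rw [hseg, range_map_mem] at h
  obtain ⟨t, ht, rfl⟩ := h
  exact ⟨by omega, by omega, rfl⟩

lemma hseg_empty {k₁ k₂ l : ℕ} (h : k₂ < k₁) : hseg k₁ k₂ l = [] := by
  rw [hseg, show k₂ + 1 - k₁ = 0 from by omega]; rfl

lemma ne_nil_of_head? {α : Type*} {l : List α} {x : α} (h : l.head? = some x) : l ≠ [] := by
  intro hc; rw [hc] at h; simp at h


def gpath : ℕ × ℕ → List (ℕ × ℕ) → List (ℕ × ℕ)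
  | p, [] => hseg p.1 (p.2 - 1) p.2
  | p, q :: L => (if q.1 = p.1 then vseg p.1 p.2 (q.2 - 1)
      else vseg p.1 p.2 q.2 ++ hseg (p.1 + 1) (q.1 - 1) q.2) ++ gpath q L

lemma gpath_spec {n : ℕ} : ∀ (L : List (ℕ × ℕ)) (p : ℕ × ℕ), p.1 < p.2 → p.2 ≤ n →
    (∀ r ∈ L, r.1 < r.2 ∧ r.2 ≤ n) → List.Chain' (· < ·) (p :: L) →
    (gpath p L).head? = some p ∧
    (∃ j, (gpath p L).getLast? = some (j, j + 1)) ∧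
    List.Chain' PathStep (gpath p L) ∧
    (∀ r ∈ gpath p L, p.1 ≤ r.1 ∧ r.1 < r.2 ∧ r.2 ≤ n) ∧
    (∀ r ∈ p :: L, r ∈ gpath p L) ∧
    (∃ z ∈ p :: L, ∀ r ∈ gpath p L, r.2 ≤ z.2) := by
  intro L
  induction L with
  | nil =>
    intro p hp hpn _ _
    have h1 : p.1 ≤ p.2 - 1 := by omega
    refine ⟨?_, ⟨p.2 - 1, ?_⟩, ?_, ?_, ?_, ⟨p, by simp, ?_⟩⟩
    · rw [show gpath p [] = hseg p.1 (p.2 - 1) p.2 from rfl, hseg_head h1]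
    · rw [show gpath p [] = hseg p.1 (p.2 - 1) p.2 from rfl, hseg_getLast h1]
      congr 2
      omega
    · exact hseg_chain' _ _ _
    · intro r hr
      obtain ⟨ha, hb, hc⟩ := hseg_mem hr
      omega
    · intro r hr
      simp at hr
      subst hr
      show r ∈ hseg r.1 (r.2 - 1) r.2
      rw [hseg, range_map_mem]
      exact ⟨0, by omega, by simp⟩
    · intro r hr
      exact (hseg_mem hr).2.2.le
  | cons q L ih =>
    intro p hp hpn hall hchain
    have hq : q.1 < q.2 ∧ q.2 ≤ n := hall q (by simp)
    have hpq : p < q := (List.isChain_cons.mp hchain).1 q rfl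
    have hpq' : p ≤ q := hpq.le
    have hp1q1 : p.1 ≤ q.1 := hpq'.1
    have hp2q2 : p.2 ≤ q.2 := hpq'.2
    obtain ⟨ihH, ihL, ihC, ihM, ihE, z, hz, hzb⟩ :=
      ih q hq.1 hq.2 (fun r hr => hall r (by simp [hr])) (List.isChain_cons.mp hchain).2
    have hgne : gpath q L ≠ [] := ne_nil_of_head? ihH
    set seg : List (ℕ × ℕ) := if q.1 = p.1 then vseg p.1 p.2 (q.2 - 1)
      else vseg p.1 p.2 q.2 ++ hseg (p.1 + 1) (q.1 - 1) q.2 with hseg_def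
    have hgp : gpath p (q :: L) = seg ++ gpath q L := rfl
    -- properties of seg
    have hsegH : seg.head? = some p := by
      rw [hseg_def]
      split_ifs with h
      · have : p.2 < q.2 := by
          rcases Prod.lt_iff.mp hpq with ⟨h1, h2⟩ | ⟨h1, h2⟩ <;> omega
        rw [vseg_head (by omega)]
      · rw [List.head?_append_of_ne_nil _ (ne_nil_of_head? (vseg_head hp2q2)), vseg_head hp2q2]
    have hsegne : seg ≠ [] := ne_nil_of_head? hsegH
    have hsegC : List.Chain' PathStep seg := by
      rw [hseg_def]
      split_ifs with h
      · exact vseg_chain' _ _ _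
      · refine List.IsChain.append (vseg_chain' _ _ _) (hseg_chain' _ _ _) ?_
        intro x hx y hy
        rcases Nat.lt_or_ge (q.1 - 1) (p.1 + 1) with hc | hc
        · rw [hseg_empty hc] at hy
          simp at hy
        · rw [vseg_getLast hp2q2] at hx
          rw [hseg_head hc] at hy
          simp at hx hy
          subst hx; subst hy
          exact Or.inl rfl
    have hsegLast : ∀ x ∈ seg.getLast?, PathStep x q := by
      intro x hx
      rw [hseg_def] at hx
      split_ifs at hx with h
      · have hlt : p.2 < q.2 := by
          rcases Prod.lt_iff.mp hpq with ⟨h1, h2⟩ | ⟨h1, h2⟩ <;> omega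
        rw [vseg_getLast (by omega)] at hx
        simp at hx
        subst hx
        refine Or.inr ?_
        have : q = (q.1, q.2) := rfl
        rw [this, h]
        congr 1
        omega
      · have hlt : p.1 < q.1 := by omega
        rcases Nat.lt_or_ge (q.1 - 1) (p.1 + 1) with hc | hc
        · -- hseg empty, last of seg = last of vseg = (p.1, q.2)
          rw [hseg_empty hc, List.append_nil, vseg_getLast hp2q2] at hx
          simp at hx
          subst hx
          refine Or.inl ?_
          have : q = (q.1, q.2) := rfl
          rw [this]
          congr 1
          omega
        · rw [List.getLast?_append_of_ne_nil _ (ne_nil_of_head? (hseg_head hc)),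
            hseg_getLast hc] at hx
          simp at hx
          subst hx
          refine Or.inl ?_
          have : q = (q.1, q.2) := rfl
          rw [this]
          congr 1
          omega
    have hsegM : ∀ r ∈ seg, p.1 ≤ r.1 ∧ r.1 < r.2 ∧ r.2 ≤ n ∧ r.2 ≤ q.2 := by
      intro r hr
      rw [hseg_def] at hr
      split_ifs at hr with h
      · obtain ⟨h1, h2, h3⟩ := vseg_mem hr
        omega
      · rcases List.mem_append.mp hr with hr | hr
        · obtain ⟨h1, h2, h3⟩ := vseg_mem hr
          omega
        · obtain ⟨h1, h2, h3⟩ := hseg_mem hr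
          omega
    refine ⟨?_, ?_, ?_, ?_, ?_, ?_⟩
    · rw [hgp, List.head?_append_of_ne_nil _ hsegne, hsegH]
    · rw [hgp, List.getLast?_append_of_ne_nil _ hgne]
      exact ihL
    · rw [hgp]
      refine List.IsChain.append hsegC ihC ?_
      intro x hx y hy
      rw [ihH] at hy
      simp at hy
      subst hy
      exact hsegLast x hx
    · rw [hgp]
      intro r hr
      rcases List.mem_append.mp hr with hr | hr
      · have := hsegM r hr
        omega
      · have := ihM r hr
        omega
    · intro r hr
      rw [hgp]
      rcases List.mem_cons.mp hr with rfl | hr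
      · exact List.mem_append.mpr (Or.inl (List.mem_of_mem_head? (by rw [hsegH]; rfl)))
      · exact List.mem_append.mpr (Or.inr (ihE r hr))
    · refine ⟨z, by simp at hz ⊢; tauto, ?_⟩
      intro r hr
      have hqz : q.2 ≤ z.2 := by
        rcases List.mem_cons.mp hz with rfl | hz'
        · exact le_refl _
        · have : q < z := (List.pairwise_iff_forall_sublist.mp
            (List.isChain_iff_pairwise.mp (List.isChain_cons.mp hchain).2)) ?_
          · exact this.le.2
          · exact List.Sublist.cons₂ q ((List.singleton_sublist).mpr hz')
      rw [hgp] at hr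
      rcases List.mem_append.mp hr with hr | hr
      · have := hsegM r hr; omega
      · have := hzb r hr; omega


lemma exists_dyck {n : ℕ} {p : ℕ × ℕ} {L : List (ℕ × ℕ)} (hp1 : 1 ≤ p.1)
    (hall : ∀ r ∈ p :: L, r.1 < r.2 ∧ r.2 ≤ n) (hc : List.Chain' (· < ·) (p :: L)) :
    ∃ d, IsDyckPath n d ∧ (∀ r ∈ p :: L, r ∈ d) ∧
      ∃ z ∈ p :: L, ∀ r ∈ d, p.1 ≤ r.1 ∧ r.1 ≤ z.2 - 1 := by
  have hp : p.1 < p.2 ∧ p.2 ≤ n := hall p (by simp)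
  obtain ⟨ihH, ihL, ihC, ihM, ihE, z, hz, hzb⟩ :=
    gpath_spec L p hp.1 hp.2 (fun r hr => hall r (by simp [hr])) hc
  have hgne : gpath p L ≠ [] := ne_nil_of_head? ihH
  have hpz : p.2 ≤ z.2 := by
    rcases List.mem_cons.mp hz with rfl | hz'
    · exact le_refl _
    · exact ((List.pairwise_cons.mp (List.isChain_iff_pairwise.mp hc)).1 z hz').le.2
  refine ⟨vseg p.1 (p.1 + 1) (p.2 - 1) ++ gpath p L, ⟨?_, ?_, ⟨p.1, ?_⟩, ?_, ?_⟩, ?_, ?_⟩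
  · intro h
    exact hgne (List.append_eq_nil_iff.mp h).2
  · intro r hr
    rcases List.mem_append.mp hr with hr | hr
    · obtain ⟨h1, h2, h3⟩ := vseg_mem hr
      exact ⟨by omega, by omega, by omega⟩
    · obtain ⟨h1, h2, h3⟩ := ihM r hr
      exact ⟨by omega, h2, h3⟩
  · rcases le_or_gt (p.1 + 1) (p.2 - 1) with h | h
    · rw [List.head?_append_of_ne_nil _ (ne_nil_of_head? (vseg_head h)), vseg_head h]
    · rw [vseg_empty h, List.nil_append, ihH]
      have : p = (p.1, p.1 + 1) := by
        have : p.2 = p.1 + 1 := by omega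
        rw [← this]
      rw [← this]
  · obtain ⟨j, hj⟩ := ihL
    exact ⟨j, by rw [List.getLast?_append_of_ne_nil _ hgne, hj]⟩
  · refine List.IsChain.append (vseg_chain' _ _ _) ihC ?_
    intro a ha b hb
    rw [ihH] at hb
    simp at hb
    subst hb
    rcases le_or_gt (p.1 + 1) (p.2 - 1) with h | h
    · rw [vseg_getLast h] at ha
      simp at ha
      subst ha
      refine Or.inr ?_
      have : p = (p.1, p.2) := rfl
      rw [this]
      congr 1
      omega
    · rw [vseg_empty h] at ha
      simp at ha
  · intro r hr
    exact List.mem_append.mpr (Or.inr (ihE r hr))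
  · refine ⟨z, hz, ?_⟩
    intro r hr
    rcases List.mem_append.mp hr with hr | hr
    · obtain ⟨h1, h2, h3⟩ := vseg_mem hr
      omega
    · have h1 := (ihM r hr).1
      have h2 := (ihM r hr).2.1
      have h3 := hzb r hr
      omega

lemma exists_minimal_old (s : Finset (ℕ × ℕ)) (h : s.Nonempty) :
    ∃ m ∈ s, ∀ x ∈ s, ¬ x < m := by
  obtain ⟨m, hm⟩ := Finset.exists_minimal h
  exact ⟨m, hm.1, fun x hx hlt => hlt.not_ge (hm.2 hx hlt.le)⟩

lemma exists_maximal_old (s : Finset (ℕ × ℕ)) (h : s.Nonempty) :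
    ∃ m ∈ s, ∀ x ∈ s, ¬ m < x := by
  obtain ⟨m, hm⟩ := Finset.exists_maximal h
  exact ⟨m, hm.1, fun x hx hlt => hlt.not_ge (hm.2 hx hlt.le)⟩

lemma chain_sorted (C : Finset (ℕ × ℕ)) (hC : IsChain (· ≤ ·) (↑C : Set (ℕ × ℕ))) :
    ∃ l : List (ℕ × ℕ), List.Chain' (· < ·) l ∧ l.toFinset = C := by
  induction C using Finset.strongInduction with
  | _ C ih =>
    rcases C.eq_empty_or_nonempty with rfl | hne
    · exact ⟨[], List.IsChain.nil, by simp⟩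
    · obtain ⟨m, hm, hmin⟩ := exists_minimal_old C hne
      obtain ⟨l', hl'c, hl'f⟩ := ih (C.erase m) (Finset.erase_ssubset hm)
        (hC.mono (Finset.coe_subset.mpr (Finset.erase_subset _ _)))
      refine ⟨m :: l', ?_, ?_⟩
      · unfold List.Chain'
        rw [List.isChain_cons]
        refine ⟨?_, hl'c⟩
        intro h hh
        have hhmem : h ∈ C.erase m := by
          rw [← hl'f]
          exact List.mem_toFinset.mpr (List.mem_of_mem_head? hh)
        have hne' : h ≠ m := (Finset.mem_erase.mp hhmem).1
        have hhC : h ∈ C := (Finset.mem_erase.mp hhmem).2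
        rcases hC (Finset.mem_coe.mpr hm) (Finset.mem_coe.mpr hhC) (Ne.symm hne') with h1 | h1
        · exact lt_of_le_of_ne h1 (Ne.symm hne')
        · exact absurd (lt_of_le_of_ne h1 hne') (hmin h hhC)
      · rw [List.toFinset_cons, hl'f, Finset.insert_erase hm]

lemma pathStep_lt {p q : ℕ × ℕ} (h : PathStep p q) : p < q := by
  rcases h with rfl | rfl <;> simp [Prod.lt_iff]

lemma dyck_pairwise {d : List (ℕ × ℕ)} (h : List.Chain' PathStep d) :
    List.Pairwise (· < ·) d :=
  List.isChain_iff_pairwise.mp (h.imp fun _ _ hpq => pathStep_lt hpq)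

lemma dyck_nodup {d : List (ℕ × ℕ)} (h : List.Chain' PathStep d) : d.Nodup :=
  (dyck_pairwise h).imp ne_of_lt

lemma nat_cover : ∀ (l : List ℕ) (s t m : ℕ),
    List.Chain' (fun u w => w = u ∨ w = u + 1) l →
    l.head? = some s → l.getLast? = some t → s ≤ m → m ≤ t → m ∈ l := by
  intro l
  induction l with
  | nil => intro s t m _ hh; simp at hh
  | cons u l ih =>
    intro s t m hc hh hl hsm hmt
    simp at hh
    subst hh
    cases l with
    | nil =>
      simp at hl
      have : m = u := by omega
      simp [this]
    | cons w l' =>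
      rcases Nat.eq_or_lt_of_le hsm with rfl | hlt
      · exact List.mem_cons_self
      · have hc' := List.isChain_cons_cons.mp hc
        have hw : w = u ∨ w = u + 1 := hc'.1
        have hl' : (w :: l').getLast? = some t := by
          rw [← List.getLast?_cons_cons (a := u)]
          exact hl
        exact List.mem_cons_of_mem _ (ih w t m hc'.2 rfl hl' (by omega) hmt)

lemma map_sum_nonneg {x : ℕ × ℕ → ℝ} (hx : ∀ p, 0 ≤ x p) (l : List (ℕ × ℕ)) :
    0 ≤ (l.map x).sum := by
  apply List.sum_nonneg
  intro y hy
  obtain ⟨q, _, rfl⟩ := List.mem_map.mp hy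
  exact hx q

lemma mem_le_sum {x : ℕ × ℕ → ℝ} (hx : ∀ p, 0 ≤ x p) :
    ∀ {l : List (ℕ × ℕ)} {p : ℕ × ℕ}, p ∈ l → x p ≤ (l.map x).sum := by
  intro l
  induction l with
  | nil => intro p hp; simp at hp
  | cons a l ih =>
    intro p hp
    simp only [List.map_cons, List.sum_cons]
    rcases List.mem_cons.mp hp with rfl | hp
    · exact le_add_of_nonneg_right (map_sum_nonneg hx l)
    · calc x p ≤ (l.map x).sum := ih hp
        _ ≤ x a + (l.map x).sum := le_add_of_nonneg_left (hx a)

lemma toFinset_sum_le {x : ℕ × ℕ → ℝ} (hx : ∀ p, 0 ≤ x p) :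
    ∀ l : List (ℕ × ℕ), ∑ p ∈ l.toFinset, x p ≤ (l.map x).sum := by
  intro l
  induction l with
  | nil => simp
  | cons a l ih =>
    rw [List.toFinset_cons, List.map_cons, List.sum_cons]
    by_cases h : a ∈ l.toFinset
    · rw [Finset.insert_eq_self.mpr h]
      calc ∑ p ∈ l.toFinset, x p ≤ (l.map x).sum := ih
        _ ≤ x a + (l.map x).sum := le_add_of_nonneg_left (hx a)
    · rw [Finset.sum_insert h]
      linarith [ih]

lemma head_le {l : List (ℕ × ℕ)} {h p : ℕ × ℕ} (hpw : List.Pairwise (· < ·) l)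
    (hh : l.head? = some h) (hm : p ∈ l) : h ≤ p := by
  cases l with
  | nil => simp at hh
  | cons a l =>
    simp at hh
    subst hh
    rcases List.mem_cons.mp hm with rfl | hm
    · exact le_refl _
    · exact ((List.pairwise_cons.mp hpw).1 p hm).le

lemma le_last : ∀ {l : List (ℕ × ℕ)} {z p : ℕ × ℕ}, List.Pairwise (· < ·) l →
    l.getLast? = some z → p ∈ l → p ≤ z := by
  intro l
  induction l with
  | nil => intro z p _ hl; simp at hl
  | cons a l ih =>
    intro z p hpw hl hm
    cases l with
    | nil =>
      simp at hl hm
      subst hl; subst hm; exact le_refl _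
    | cons b l' =>
      rw [List.getLast?_cons_cons] at hl
      rcases List.mem_cons.mp hm with rfl | hm
      · have hab : p < b := (List.pairwise_cons.mp hpw).1 b (by simp)
        have hbz : b ≤ z := ih (List.pairwise_cons.mp hpw).2 hl (by simp)
        exact le_trans hab.le hbz
      · exact ih (List.pairwise_cons.mp hpw).2 hl hm

lemma Mval_le (i c : ℕ) (d : List (ℕ × ℕ)) :
    Mval (fun j => if j = i then c else 0) d ≤ c := by
  rw [Mval, Finset.sum_ite_eq']
  split_ifs <;> omega

lemma Mval_eq {i : ℕ} (c : ℕ) {d : List (ℕ × ℕ)} (h : i ∈ d.map Prod.fst) :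
    Mval (fun j => if j = i then c else 0) d = c := by
  rw [Mval, Finset.sum_ite_eq', if_pos (List.mem_toFinset.mpr h)]

lemma mem_FFLV_iff {n i : ℕ} (hn : 2 ≤ n) (hi1 : 1 ≤ i) (hi2 : i ≤ n - 1) (c : ℕ)
    (x : ℕ × ℕ → ℝ) :
    x ∈ FFLV n (fun j => if j = i then c else 0) ↔
      (∀ p, p ∉ Qset n i → x p = 0) ∧ (∀ p, 0 ≤ x p) ∧
      ∀ C : Finset (ℕ × ℕ), ↑C ⊆ Qset n i → IsChain (· ≤ ·) (↑C : Set (ℕ × ℕ)) →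
        ∑ p ∈ C, x p ≤ (c : ℝ) := by
  classical
  have hin : i + 1 ≤ n := by omega
  constructor
  · rintro ⟨h0, hpos, hd⟩
    refine ⟨?_, hpos, ?_⟩
    · intro p hpQ
      by_cases hv : ValidPair n p
      · obtain ⟨hv1, hv2, hv3⟩ := hv
        have hall : ∀ r ∈ [p], r.1 < r.2 ∧ r.2 ≤ n := by
          intro r hr; simp at hr; subst hr; exact ⟨hv2, hv3⟩
        obtain ⟨d, hdd, hmem, z, hzm, hzb⟩ :=
          exists_dyck (p := p) (L := []) hv1 hall (List.IsChain.singleton p)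
        have hzp : z = p := by simpa using hzm
        rw [hzp] at hzb
        have hMv : Mval (fun j => if j = i then c else 0) d = 0 := by
          rw [Mval, Finset.sum_ite_eq']
          rw [if_neg]
          intro hiF
          obtain ⟨r, hrd, hri⟩ := List.mem_map.mp (List.mem_toFinset.mp hiF)
          have hb := hzb r hrd
          have : ¬ (1 ≤ p.1 ∧ p.1 ≤ i ∧ i + 1 ≤ p.2 ∧ p.2 ≤ n) := hpQ
          omega
        have h1 : x p ≤ Sval x d := mem_le_sum hpos (hmem p (by simp))
        have h2 := hd d hdd
        rw [hMv] at h2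
        have := hpos p
        simp at h2
        linarith [le_trans h1 h2]
      · exact h0 p hv
    · intro C hCQ hCch
      rcases C.eq_empty_or_nonempty with rfl | hne
      · simp
      · obtain ⟨l, hlc, hlf⟩ := chain_sorted C hCch
        cases l with
        | nil => rw [← hlf] at hne; simp at hne
        | cons p L =>
          have hallQ : ∀ r ∈ p :: L, r ∈ Qset n i := by
            intro r hr
            exact hCQ (by rw [← hlf]; exact Finset.mem_coe.mpr (List.mem_toFinset.mpr hr))
          have hall : ∀ r ∈ p :: L, r.1 < r.2 ∧ r.2 ≤ n := by
            intro r hr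
            obtain ⟨hq1, hq2, hq3, hq4⟩ := hallQ r hr
            exact ⟨by omega, hq4⟩
          have hp1 : 1 ≤ p.1 := (hallQ p (by simp)).1
          obtain ⟨d, hdd, hmem, _⟩ := exists_dyck hp1 hall hlc
          have hsub : C ⊆ d.toFinset := by
            intro r hr
            rw [← hlf] at hr
            exact List.mem_toFinset.mpr (hmem r (List.mem_toFinset.mp hr))
          calc ∑ p ∈ C, x p ≤ ∑ p ∈ d.toFinset, x p :=
                Finset.sum_le_sum_of_subset_of_nonneg hsub (fun q _ _ => hpos q)
            _ ≤ (d.map x).sum := toFinset_sum_le hpos d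
            _ = Sval x d := rfl
            _ ≤ (Mval (fun j => if j = i then c else 0) d : ℝ) := hd d hdd
            _ ≤ (c : ℝ) := Nat.cast_le.mpr (Mval_le i c d)
  · rintro ⟨h0, hpos, hch⟩
    have hQv : ∀ p, p ∈ Qset n i → ValidPair n p := by
      intro p hp
      obtain ⟨h1, h2, h3, h4⟩ := hp
      exact ⟨h1, by omega, h4⟩
    refine ⟨?_, hpos, ?_⟩
    · intro p hv
      exact h0 p (fun hpQ => hv (hQv p hpQ))
    · rintro d ⟨hdne, hdval, ⟨s, hs⟩, ⟨t, ht⟩, hdc⟩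
      have hnd : d.Nodup := dyck_nodup hdc
      have hpw : List.Pairwise (· < ·) d := dyck_pairwise hdc
      have hSval : Sval x d = ∑ p ∈ d.toFinset, x p := (List.sum_toFinset x hnd).symm
      set F := d.toFinset.filter (fun p => p ∈ Qset n i) with hF
      have hFsum : ∑ p ∈ F, x p = ∑ p ∈ d.toFinset, x p := by
        apply Finset.sum_filter_of_ne
        intro p _ hxp
        by_contra hpQ
        exact hxp (h0 p hpQ)
      have hFQ : ↑F ⊆ Qset n i := by
        intro p hp
        exact (Finset.mem_filter.mp (Finset.mem_coe.mp hp)).2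
      have hFch : IsChain (· ≤ ·) (↑F : Set (ℕ × ℕ)) := by
        intro p hp q hq hne
        have hpd : p ∈ d := List.mem_toFinset.mp (Finset.mem_filter.mp hp).1
        have hqd : q ∈ d := List.mem_toFinset.mp (Finset.mem_filter.mp hq).1
        have hsym : List.Pairwise (fun a b : ℕ × ℕ => a < b ∨ b < a) d :=
          hpw.imp fun h => Or.inl h
        have : Std.Symm (fun a b : ℕ × ℕ => a < b ∨ b < a) := ⟨fun a b h => h.symm⟩
        have := List.Pairwise.forall hsym hpd hqd hne
        rcases this with h | h
        · exact Or.inl h.le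
        · exact Or.inr h.le
      have hFle : ∑ p ∈ F, x p ≤ (c : ℝ) := hch F hFQ hFch
      rcases F.eq_empty_or_nonempty with hFe | ⟨p0, hp0⟩
      · rw [hSval, ← hFsum, hFe]
        simp
      · have hp0d : p0 ∈ d := List.mem_toFinset.mp (Finset.mem_filter.mp hp0).1
        have hp0Q : p0 ∈ Qset n i := (Finset.mem_filter.mp hp0).2
        obtain ⟨hq1, hq2, hq3, hq4⟩ := hp0Q
        have hfc : List.Chain' (fun u w => w = u ∨ w = u + 1) (d.map Prod.fst) := by
          unfold List.Chain'
          rw [List.isChain_map]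
          refine hdc.imp ?_
          intro a b hab
          rcases hab with rfl | rfl
          · exact Or.inr rfl
          · exact Or.inl rfl
        have hfh : (d.map Prod.fst).head? = some s := by
          rw [List.head?_map, hs]; rfl
        have hft : (d.map Prod.fst).getLast? = some t := by
          rw [List.getLast?_map, ht]; rfl
        have hsle : s ≤ i := by
          have : (s, s + 1) ≤ p0 := head_le hpw hs hp0d
          have := this.1
          omega
        have htge : i ≤ t := by
          have : p0 ≤ (t, t + 1) := le_last hpw ht hp0d
          have := this.2
          omega
        have hicov : i ∈ d.map Prod.fst := nat_cover _ s t i hfc hfh hft hsle htge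
        rw [Mval_eq c hicov, hSval, ← hFsum]
        exact hFle

lemma preceq_iff {p q : ℕ × ℕ} : preceq p q ↔ p ≤ q := Iff.rfl

lemma chi_mem {n i : ℕ} (hn : 2 ≤ n) (hi1 : 1 ≤ i) (hi2 : i ≤ n - 1) (c : ℕ)
    (A : Set (ℕ × ℕ)) (hAQ : A ⊆ Qset n i) (hAanti : IsAntichain preceq A) :
    (fun p => (c : ℝ) * chi A p) ∈ FFLV n (fun j => if j = i then c else 0) := by
  classical
  rw [mem_FFLV_iff hn hi1 hi2]
  refine ⟨?_, ?_, ?_⟩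
  · intro p hp
    have hpA : p ∉ A := fun h => hp (hAQ h)
    simp [chi, Set.indicator_of_notMem hpA]
  · intro p
    exact mul_nonneg (Nat.cast_nonneg c) (Set.indicator_nonneg (fun _ _ => zero_le_one) p)
  · intro C hCQ hCch
    by_cases hCA : ∃ r ∈ C, r ∈ A
    · obtain ⟨r, hrC, hrA⟩ := hCA
      have huniq : ∀ b ∈ C, b ∈ A → b = r := by
        intro b hbC hbA
        by_contra hbr
        rcases hCch (Finset.mem_coe.mpr hbC) (Finset.mem_coe.mpr hrC) hbr with h | h
        · exact hAanti hbA hrA hbr (preceq_iff.mpr h)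
        · exact hAanti hrA hbA (Ne.symm hbr) (preceq_iff.mpr h)
      rw [Finset.sum_eq_single_of_mem r hrC]
      · rw [chi, Set.indicator_of_mem hrA]
        simp
      · intro b hbC hbr
        have hbA : b ∉ A := fun h => hbr (huniq b hbC h)
        rw [chi, Set.indicator_of_notMem hbA]
        simp
    · push_neg at hCA
      have : ∀ p ∈ C, (c : ℝ) * chi A p = 0 := by
        intro p hp
        rw [chi, Set.indicator_of_notMem (hCA p hp)]
        simp
      rw [Finset.sum_congr rfl this]
      simp

lemma singleton_chain_bound {n i : ℕ} (hn : 2 ≤ n) (hi1 : 1 ≤ i) (hi2 : i ≤ n - 1) {c : ℕ}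
    {y : ℕ × ℕ → ℝ} (hy : y ∈ FFLV n (fun j => if j = i then c else 0)) :
    ∀ p ∈ Qset n i, y p ≤ (c : ℝ) := by
  obtain ⟨h0, hpos, hch⟩ := (mem_FFLV_iff hn hi1 hi2 c y).mp hy
  intro p hp
  have := hch {p} (by simpa using hp)
    (by intro a ha b hb hne; simp at ha hb; subst ha; subst hb; exact absurd rfl hne)
  simpa using this

lemma chi_extreme {n i : ℕ} (hn : 2 ≤ n) (hi1 : 1 ≤ i) (hi2 : i ≤ n - 1) {c : ℕ}
    (hc : 1 ≤ c) (A : Set (ℕ × ℕ)) (hAQ : A ⊆ Qset n i) (hAanti : IsAntichain preceq A) :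
    (fun p => (c : ℝ) * chi A p) ∈
      Set.extremePoints ℝ (FFLV n (fun j => if j = i then c else 0)) := by
  classical
  rw [mem_extremePoints]
  refine ⟨chi_mem hn hi1 hi2 c A hAQ hAanti, ?_⟩
  intro x₁ hx₁ x₂ hx₂ hseg
  obtain ⟨u, w, hu, hw, huw, heq⟩ := hseg
  have h1 := (mem_FFLV_iff hn hi1 hi2 c x₁).mp hx₁
  have h2 := (mem_FFLV_iff hn hi1 hi2 c x₂).mp hx₂
  have hb1 := singleton_chain_bound hn hi1 hi2 hx₁
  have hb2 := singleton_chain_bound hn hi1 hi2 hx₂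
  have heqp : ∀ p, u * x₁ p + w * x₂ p = (c : ℝ) * chi A p := by
    intro p
    have := congrFun heq p
    simpa using this
  have main : ∀ (u w : ℝ) (y₁ y₂ : ℕ × ℕ → ℝ), 0 < u → 0 < w → u + w = 1 →
      (∀ p, 0 ≤ y₁ p) → (∀ p, 0 ≤ y₂ p) →
      (∀ p ∈ Qset n i, y₁ p ≤ (c : ℝ)) → (∀ p ∈ Qset n i, y₂ p ≤ (c : ℝ)) →
      (∀ p, u * y₁ p + w * y₂ p = (c : ℝ) * chi A p) →
      y₁ = fun p => (c : ℝ) * chi A p := by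
    intro u w y₁ y₂ hu hw huw hp1 hp2 hub1 hub2 heqp
    funext p
    by_cases hpA : p ∈ A
    · rw [chi, Set.indicator_of_mem hpA]
      have hcv : u * y₁ p + w * y₂ p = (c : ℝ) := by
        rw [heqp p, chi, Set.indicator_of_mem hpA]; ring
      have hy1 : y₁ p ≤ (c : ℝ) := hub1 p (hAQ hpA)
      have hy2 : y₂ p ≤ (c : ℝ) := hub2 p (hAQ hpA)
      have k1 : 0 ≤ u * ((c : ℝ) - y₁ p) := mul_nonneg hu.le (by linarith)
      have k2 : 0 ≤ w * ((c : ℝ) - y₂ p) := mul_nonneg hw.le (by linarith)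
      have ksum : u * ((c : ℝ) - y₁ p) + w * ((c : ℝ) - y₂ p) = 0 := by
        have : (u + w) * (c : ℝ) = (c : ℝ) := by rw [huw]; ring
        nlinarith [hcv]
      have : u * ((c : ℝ) - y₁ p) = 0 := by linarith
      have := (mul_eq_zero.mp this).resolve_left (ne_of_gt hu)
      simp only [mul_one]
      linarith
    · rw [chi, Set.indicator_of_notMem hpA]
      have hcv : u * y₁ p + w * y₂ p = 0 := by
        rw [heqp p, chi, Set.indicator_of_notMem hpA]; ring
      have k1 : 0 ≤ u * y₁ p := mul_nonneg hu.le (hp1 p)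
      have k2 : 0 ≤ w * y₂ p := mul_nonneg hw.le (hp2 p)
      have : u * y₁ p = 0 := by linarith
      have := (mul_eq_zero.mp this).resolve_left (ne_of_gt hu)
      simp only [mul_zero]
      linarith
  constructor
  · exact main u w x₁ x₂ hu hw huw h1.2.1 h2.2.1 hb1 hb2 heqp
  · exact main w u x₂ x₁ hw hu (by linarith) h2.2.1 h1.2.1 hb2 hb1
      (fun p => by rw [← heqp p]; ring)

lemma extreme_is_chi {n i : ℕ} (hn : 2 ≤ n) (hi1 : 1 ≤ i) (hi2 : i ≤ n - 1) {c : ℕ}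
    (hc : 1 ≤ c) {v : ℕ × ℕ → ℝ}
    (hv : v ∈ Set.extremePoints ℝ (FFLV n (fun j => if j = i then c else 0))) :
    ∃ A : Set (ℕ × ℕ), A ⊆ Qset n i ∧ IsAntichain preceq A ∧
      v = fun p => (c : ℝ) * chi A p := by
  classical
  obtain ⟨hvF, hext⟩ := mem_extremePoints.mp hv
  obtain ⟨h0, hpos, hch⟩ := (mem_FFLV_iff hn hi1 hi2 c v).mp hvF
  have hub : ∀ p ∈ Qset n i, v p ≤ (c : ℝ) := singleton_chain_bound hn hi1 hi2 hvF
  set Qfin : Finset (ℕ × ℕ) := (Finset.Icc 1 i) ×ˢ (Finset.Icc (i + 1) n) with hQfin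
  have hQmem : ∀ p : ℕ × ℕ, p ∈ Qfin ↔ p ∈ Qset n i := by
    intro p
    rw [hQfin, Finset.mem_product, Finset.mem_Icc, Finset.mem_Icc]
    constructor
    · rintro ⟨⟨a1, a2⟩, ⟨a3, a4⟩⟩; exact ⟨a1, a2, a3, a4⟩
    · rintro ⟨a1, a2, a3, a4⟩; exact ⟨⟨a1, a2⟩, ⟨a3, a4⟩⟩
  set S : Finset (ℕ × ℕ) := Qfin.filter (fun p => v p ≠ 0) with hS
  have hvS : ∀ p, p ∉ S → v p = 0 := by
    intro p hp
    by_cases hq : p ∈ Qfin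
    · by_contra hne
      exact hp (Finset.mem_filter.mpr ⟨hq, hne⟩)
    · exact h0 p (fun h => hq ((hQmem p).mpr h))
  have hSQ : ∀ p ∈ S, p ∈ Qset n i := fun p hp => (hQmem p).mp (Finset.mem_filter.mp hp).1
  set A : Finset (ℕ × ℕ) := S.filter (fun p => ∀ q ∈ S, ¬ p < q) with hA
  have hAS : ∀ p ∈ A, p ∈ S := fun p hp => (Finset.mem_filter.mp hp).1
  have hAQ : (↑A : Set (ℕ × ℕ)) ⊆ Qset n i := fun p hp => hSQ p (hAS p (Finset.mem_coe.mp hp))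
  have hAanti : IsAntichain preceq (↑A : Set (ℕ × ℕ)) := by
    intro p hp q hq hne hpr
    have hple : p ≤ q := preceq_iff.mp hpr
    have hplt : p < q := lt_of_le_of_ne hple hne
    exact (Finset.mem_filter.mp (Finset.mem_coe.mp hp)).2 q (hAS q (Finset.mem_coe.mp hq)) hplt
  have hmax : ∀ q ∈ S, ∃ r ∈ A, q ≤ r := by
    intro q hq
    set T : Finset (ℕ × ℕ) := S.filter (fun p => q ≤ p) with hT
    have hqT : q ∈ T := Finset.mem_filter.mpr ⟨hq, le_refl q⟩
    obtain ⟨r, hrT, hrmax⟩ := exists_maximal_old T ⟨q, hqT⟩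
    refine ⟨r, ?_, (Finset.mem_filter.mp hrT).2⟩
    rw [hA, Finset.mem_filter]
    refine ⟨(Finset.mem_filter.mp hrT).1, ?_⟩
    intro x hx hrx
    exact hrmax x (Finset.mem_filter.mpr ⟨hx, le_trans (Finset.mem_filter.mp hrT).2 hrx.le⟩) hrx
  rcases S.eq_empty_or_nonempty with hSe | hSne
  · refine ⟨∅, Set.empty_subset _, Set.subsingleton_empty.isAntichain _, ?_⟩
    funext p
    rw [chi, Set.indicator_of_notMem (Set.notMem_empty p)]
    rw [hvS p (by rw [hSe]; exact Finset.notMem_empty p)]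
    simp
  · have hAne : A.Nonempty := by
      obtain ⟨m, hm, hmmax⟩ := exists_maximal_old S hSne
      exact ⟨m, Finset.mem_filter.mpr ⟨hm, hmmax⟩⟩
    obtain ⟨r₀, hr₀A, hr₀min⟩ := Finset.exists_min_image A v hAne
    set t : ℝ := v r₀ with htdef
    have ht0 : 0 < t := by
      have h1 := hpos r₀
      have h2 : v r₀ ≠ 0 := (Finset.mem_filter.mp (hAS r₀ hr₀A)).2
      rcases lt_or_eq_of_le h1 with h | h
      · exact h
      · exact absurd h.symm h2
    have htc : t ≤ (c : ℝ) := hub r₀ (hAQ (Finset.mem_coe.mpr hr₀A))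
    have key : ∀ C : Finset (ℕ × ℕ), ↑C ⊆ Qset n i → IsChain (· ≤ ·) (↑C : Set (ℕ × ℕ)) →
        (∀ p ∈ C, p ∉ A) → ∑ p ∈ C, v p ≤ (c : ℝ) - t := by
      intro C hCQ hCch hCA
      set D : Finset (ℕ × ℕ) := C.filter (fun p => p ∈ S) with hD
      have hDsum : ∑ p ∈ D, v p = ∑ p ∈ C, v p := by
        apply Finset.sum_filter_of_ne
        intro p _ hvp
        by_contra hpS
        exact hvp (hvS p hpS)
      rcases D.eq_empty_or_nonempty with hDe | hDne
      · rw [← hDsum, hDe]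
        simp
        linarith
      · obtain ⟨q, hqD, hqmax⟩ := exists_maximal_old D hDne
        have hqC : q ∈ C := (Finset.mem_filter.mp hqD).1
        have hqS : q ∈ S := (Finset.mem_filter.mp hqD).2
        have hqle : ∀ p ∈ D, p ≤ q := by
          intro p hp
          by_cases hpq : p = q
          · exact hpq.le
          · rcases hCch (Finset.mem_coe.mpr (Finset.mem_filter.mp hp).1)
              (Finset.mem_coe.mpr hqC) hpq with h | h
            · exact h
            · exact absurd (lt_of_le_of_ne h (Ne.symm hpq)) (hqmax p hp)
        obtain ⟨r, hrA, hqr⟩ := hmax q hqS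
        have hqnr : q ≠ r := fun h => (hCA q hqC) (h ▸ hrA)
        have hrD : r ∉ D := fun h => (hCA r (Finset.mem_filter.mp h).1) hrA
        have hins : IsChain (· ≤ ·) (↑(insert r D) : Set (ℕ × ℕ)) := by
          intro x hx y hy hxy
          simp only [Finset.coe_insert, Set.mem_insert_iff, Finset.mem_coe] at hx hy
          rcases hx with rfl | hx <;> rcases hy with rfl | hy
          · exact absurd rfl hxy
          · exact Or.inr (le_trans (hqle y hy) hqr)
          · exact Or.inl (le_trans (hqle x hx) hqr)
          · exact hCch (Finset.mem_coe.mpr (Finset.mem_filter.mp hx).1)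
              (Finset.mem_coe.mpr (Finset.mem_filter.mp hy).1) hxy
        have hinsQ : (↑(insert r D) : Set (ℕ × ℕ)) ⊆ Qset n i := by
          intro x hx
          simp only [Finset.coe_insert, Set.mem_insert_iff, Finset.mem_coe] at hx
          rcases hx with rfl | hx
          · exact hAQ (Finset.mem_coe.mpr hrA)
          · exact hCQ (Finset.mem_coe.mpr (Finset.mem_filter.mp hx).1)
        have hsum := hch (insert r D) hinsQ hins
        rw [Finset.sum_insert hrD] at hsum
        have hvr : t ≤ v r := hr₀min r hrA
        rw [← hDsum]
        linarith
    by_cases htc' : (c : ℝ) ≤ t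
    · refine ⟨↑A, hAQ, hAanti, ?_⟩
      funext p
      by_cases hpA : p ∈ A
      · rw [chi, Set.indicator_of_mem (Finset.mem_coe.mpr hpA), mul_one]
        have h1 : v p ≤ (c : ℝ) := hub p (hAQ (Finset.mem_coe.mpr hpA))
        have h2 : t ≤ v p := hr₀min p hpA
        linarith
      · rw [chi, Set.indicator_of_notMem (fun h => hpA (Finset.mem_coe.mp h)), mul_zero]
        by_cases hpS : p ∈ S
        · obtain ⟨r, hrA, hpr⟩ := hmax p hpS
          have hpnr : p ≠ r := fun h => hpA (h ▸ hrA)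
          have hchain : IsChain (· ≤ ·) (↑({p, r} : Finset (ℕ × ℕ)) : Set (ℕ × ℕ)) := by
            intro x hx y hy hxy
            simp only [Finset.coe_insert, Set.mem_insert_iff, Finset.coe_singleton,
              Set.mem_singleton_iff, Finset.mem_coe] at hx hy
            rcases hx with rfl | rfl <;> rcases hy with rfl | rfl
            · exact absurd rfl hxy
            · exact Or.inl hpr
            · exact Or.inr hpr
            · exact absurd rfl hxy
          have hsubQ : (↑({p, r} : Finset (ℕ × ℕ)) : Set (ℕ × ℕ)) ⊆ Qset n i := by
            intro x hx
            simp only [Finset.coe_insert, Set.mem_insert_iff, Finset.coe_singleton,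
              Set.mem_singleton_iff] at hx
            rcases hx with rfl | rfl
            · exact hSQ x hpS
            · exact hAQ (Finset.mem_coe.mpr hrA)
          have hsum := hch {p, r} hsubQ hchain
          rw [Finset.sum_pair hpnr] at hsum
          have hvr : t ≤ v r := hr₀min r hrA
          have hvp0 : v p ≤ 0 := by linarith
          exact le_antisymm hvp0 (hpos p)
        · exact hvS p hpS
    · push_neg at htc'
      have hcpos : (0 : ℝ) < (c : ℝ) := by
        have : (1 : ℝ) ≤ (c : ℝ) := by exact_mod_cast hc
        linarith
      set lam : ℝ := t / c with hlam
      have hlam0 : 0 < lam := div_pos ht0 hcpos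
      have hlam1 : lam < 1 := (div_lt_one hcpos).mpr htc'
      have hlamne : (1 : ℝ) - lam ≠ 0 := by linarith
      set x : ℕ × ℕ → ℝ := fun p => (c : ℝ) * chi ↑A p with hxdef
      set y : ℕ × ℕ → ℝ := fun p => (1 - lam)⁻¹ * (v p - t * chi ↑A p) with hydef
      have hchiA : ∀ p, chi (↑A : Set (ℕ × ℕ)) p = if p ∈ A then (1 : ℝ) else 0 := by
        intro p
        by_cases hp : p ∈ A
        · rw [chi, Set.indicator_of_mem (Finset.mem_coe.mpr hp), if_pos hp]
        · rw [chi, Set.indicator_of_notMem (fun h => hp (Finset.mem_coe.mp h)), if_neg hp]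
      have hxF : x ∈ FFLV n (fun j => if j = i then c else 0) :=
        chi_mem hn hi1 hi2 c ↑A hAQ hAanti
      have hyF : y ∈ FFLV n (fun j => if j = i then c else 0) := by
        rw [mem_FFLV_iff hn hi1 hi2]
        refine ⟨?_, ?_, ?_⟩
        · intro p hp
          have hpA : p ∉ A := fun h => hp (hAQ (Finset.mem_coe.mpr h))
          rw [hydef]
          simp only
          rw [hchiA p, if_neg hpA, hvS p (fun h => hp (hSQ p h))]
          ring
        · intro p
          rw [hydef]
          simp only
          refine mul_nonneg (le_of_lt (inv_pos.mpr (by linarith))) ?_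
          rw [hchiA p]
          by_cases hpA : p ∈ A
          · rw [if_pos hpA, mul_one]
            have := hr₀min p hpA
            linarith
          · rw [if_neg hpA, mul_zero]
            have := hpos p
            linarith
        · intro C hCQ hCch
          have hsplit : ∑ p ∈ C, y p = (1 - lam)⁻¹ * (∑ p ∈ C, v p - t * ∑ p ∈ C, chi ↑A p) := by
            rw [hydef]
            simp only
            rw [← Finset.mul_sum, Finset.sum_sub_distrib, ← Finset.mul_sum]
          have hctne : (c : ℝ) - t ≠ 0 := by linarith
          have hinv : (1 - lam)⁻¹ * ((c : ℝ) - t) = (c : ℝ) := by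
            rw [hlam, show (1 : ℝ) - t / (c : ℝ) = ((c : ℝ) - t) / (c : ℝ) from by field_simp,
              inv_div, div_mul_cancel₀ _ hctne]
          by_cases hCA : ∃ r ∈ C, r ∈ A
          · obtain ⟨r, hrC, hrA⟩ := hCA
            have huniq : ∀ b ∈ C, b ∈ A → b = r := by
              intro b hbC hbA
              by_contra hbr
              rcases hCch (Finset.mem_coe.mpr hbC) (Finset.mem_coe.mpr hrC) hbr with h | h
              · exact hAanti (Finset.mem_coe.mpr hbA) (Finset.mem_coe.mpr hrA) hbr
                  (preceq_iff.mpr h)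
              · exact hAanti (Finset.mem_coe.mpr hrA) (Finset.mem_coe.mpr hbA) (Ne.symm hbr)
                  (preceq_iff.mpr h)
            have hchisum : ∑ p ∈ C, chi (↑A : Set (ℕ × ℕ)) p = 1 := by
              rw [Finset.sum_eq_single_of_mem r hrC]
              · rw [hchiA r, if_pos hrA]
              · intro b hbC hbr
                rw [hchiA b, if_neg (fun h => hbr (huniq b hbC h))]
            have hCsum : ∑ p ∈ C, v p ≤ (c : ℝ) := hch C hCQ hCch
            rw [hsplit, hchisum, mul_one, ← hinv]
            apply mul_le_mul_of_nonneg_left _ (le_of_lt (inv_pos.mpr (by linarith)))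
            linarith
          · push_neg at hCA
            have hchisum : ∑ p ∈ C, chi (↑A : Set (ℕ × ℕ)) p = 0 := by
              apply Finset.sum_eq_zero
              intro p hp
              rw [hchiA p, if_neg (hCA p hp)]
            have hCsum : ∑ p ∈ C, v p ≤ (c : ℝ) - t :=
              key C hCQ hCch (fun p hp => hCA p hp)
            rw [hsplit, hchisum, mul_zero, sub_zero, ← hinv]
            apply mul_le_mul_of_nonneg_left _ (le_of_lt (inv_pos.mpr (by linarith)))
            linarith
      have hseg : v ∈ openSegment ℝ x y := by
        refine ⟨lam, 1 - lam, hlam0, by linarith, by ring, ?_⟩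
        funext p
        simp only [Pi.add_apply, Pi.smul_apply, smul_eq_mul]
        rw [hxdef, hydef]
        simp only
        have h1 : lam * ((c : ℝ) * chi ↑A p) = t * chi ↑A p := by
          rw [hlam]
          field_simp
        have h2 : (1 - lam) * ((1 - lam)⁻¹ * (v p - t * chi ↑A p)) = v p - t * chi ↑A p := by
          rw [← mul_assoc, mul_inv_cancel₀ hlamne, one_mul]
        rw [h1, h2]
        ring
      obtain ⟨hxv, _⟩ := hext x hxF y hyF hseg
      exact ⟨↑A, hAQ, hAanti, hxv.symm⟩

end FFLVaux

/-- for `1 ≤ i ≤ n-1` with `a_i ≥ 1`, a point is a vertex of `P_{a_iω_i}`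
iff it is `a_i·χ_A` for a `≼`-antichain `A ⊆ Q_i`. -/
theorem vertices_of_single_fundamental (n : ℕ) (hn : 2 ≤ n) (a : ℕ → ℕ) (i : ℕ)
    (hi1 : 1 ≤ i) (hi2 : i ≤ n - 1) (ha : 1 ≤ a i) (v : ℕ × ℕ → ℝ) :
    v ∈ Set.extremePoints ℝ (FFLV n fun j => if j = i then a i else 0) ↔
      ∃ A : Set (ℕ × ℕ), A ⊆ Qset n i ∧ IsAntichain preceq A ∧
        v = fun p => (a i : ℝ) * chi A p := by
  constructor
  · intro hv
    exact FFLVaux.extreme_is_chi hn hi1 hi2 ha hv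
  · rintro ⟨A, hAQ, hAanti, rfl⟩
    exact FFLVaux.chi_extreme hn hi1 hi2 ha A hAQ hAanti
end

section
/- Fix 1 ≤ i ≤ n−2 with a_i, a_{i+1} ≥ 1, and ≼-antichains A_i ⊆ Q_i, A_{i+1} ⊆ Q_{i+1} such that a_iχ_{A_i} + a_{i+1}χ_{A_{i+1}} is a vertex of P_{a_iω_i + a_{i+1}ω_{i+1}}. Then any two ≼-comparable elements (k_1,l_1) ∈ A_i and (k_2,l_2) ∈ A_{i+1} satisfy (k_1,l_1) ≼ (k_2,l_2). -/
open Finset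

/-- strict step relation -/
def Rrel (p q : ℕ × ℕ) : Prop := preceq p q ∧ p.1 + p.2 < q.1 + q.2

instance : IsTrans (ℕ × ℕ) Rrel :=
  ⟨fun _ _ _ h1 h2 => ⟨⟨le_trans h1.1.1 h2.1.1, le_trans h1.1.2 h2.1.2⟩, lt_trans h1.2 h2.2⟩⟩

lemma pathStep_imp {p q : ℕ × ℕ} (h : PathStep p q) : Rrel p q := by
  rcases h with h | h <;> subst h <;>
    exact ⟨⟨by simp, by simp⟩, by simp⟩

lemma dyck_pairwise {n : ℕ} {d : List (ℕ × ℕ)} (hd : IsDyckPath n d) :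
    d.Pairwise Rrel := by
  have hc : List.Chain' Rrel d := List.IsChain.imp (fun a b h => pathStep_imp h) hd.2.2.2.2
  exact List.isChain_iff_pairwise.mp hc

lemma rel_getLast : ∀ (d : List (ℕ × ℕ)), d.Pairwise Rrel → ∀ r ∈ d, ∀ (h : d ≠ []),
    r = d.getLast h ∨ Rrel r (d.getLast h) := by
  intro d
  induction d with
  | nil => simp
  | cons a t ih =>
    intro hpw r hr h
    rcases eq_or_ne t [] with ht | ht
    · subst ht
      simp only [List.mem_singleton] at hr; subst hr
      left; simp [List.getLast]
    · have hgl : (a :: t).getLast h = t.getLast ht := List.getLast_cons ht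
      rw [hgl]
      rcases List.mem_cons.mp hr with rfl | hrt
      · right; exact (List.pairwise_cons.mp hpw).1 _ (List.getLast_mem ht)
      · exact ih (List.pairwise_cons.mp hpw).2 r hrt ht

lemma row_ivt : ∀ (d : List (ℕ × ℕ)), List.Chain' PathStep d → ∀ r ∈ d, ∀ j, r.1 ≤ j →
    ∀ (h : d ≠ []), j ≤ (d.getLast h).1 → ∃ s ∈ d, s.1 = j := by
  intro d
  induction d with
  | nil => simp
  | cons a t ih =>
    intro hc r hr j h1 h hlast
    rcases eq_or_ne t [] with ht | ht
    · subst ht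
      simp only [List.mem_singleton] at hr; subst hr
      simp only [List.getLast_singleton] at hlast
      exact ⟨r, by simp, by omega⟩
    · have hgl : (a :: t).getLast h = t.getLast ht := List.getLast_cons ht
      rw [hgl] at hlast
      obtain ⟨b, t', rfl⟩ := List.exists_cons_of_ne_nil ht
      have hstep : PathStep a b := (List.isChain_cons_cons.mp hc).1
      have hct : List.Chain' PathStep (b :: t') := (List.isChain_cons_cons.mp hc).2
      rcases List.mem_cons.mp hr with rfl | hrt
      · by_cases hj : r.1 = j
        · exact ⟨r, by simp, hj⟩
        · have hb : b.1 ≤ j := by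
            rcases hstep with h' | h' <;> subst h' <;> simp <;> omega
          obtain ⟨s, hs, hs2⟩ := ih hct b (by simp) j hb ht hlast
          exact ⟨s, by simp [hs], hs2⟩
      · obtain ⟨s, hs, hs2⟩ := ih hct r hrt j h1 ht hlast
        exact ⟨s, by simp [hs], hs2⟩

lemma row_mem {n : ℕ} {d : List (ℕ × ℕ)} (hd : IsDyckPath n d) {r : ℕ × ℕ} (hr : r ∈ d)
    {j : ℕ} (h1 : r.1 ≤ j) (h2 : j + 1 ≤ r.2) : j ∈ (d.map Prod.fst).toFinset := by
  have hne : d ≠ [] := hd.1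
  obtain ⟨i0, hi0⟩ := hd.2.2.2.1
  have hl : d.getLast hne = (i0, i0 + 1) := by
    rw [List.getLast?_eq_getLast_of_ne_nil hne] at hi0
    exact Option.some_inj.mp hi0
  have hpw := dyck_pairwise hd
  have hr2 : r.2 ≤ i0 + 1 := by
    rcases rel_getLast d hpw r hr hne with h | h
    · rw [h, hl]
    · have := h.1.2; rw [hl] at this; exact this
  have hj : j ≤ (d.getLast hne).1 := by rw [hl]; simp; omega
  obtain ⟨s, hs, hs1⟩ := row_ivt d hd.2.2.2.2 r hr j h1 hne hj
  simp only [List.mem_toFinset, List.mem_map]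
  exact ⟨s, hs, hs1⟩

lemma mem_comparable {n : ℕ} {d : List (ℕ × ℕ)} (hd : IsDyckPath n d) {r s : ℕ × ℕ}
    (hr : r ∈ d) (hs : s ∈ d) : preceq r s ∨ preceq s r := by
  rcases eq_or_ne r s with rfl | hne
  · exact Or.inl ⟨le_refl _, le_refl _⟩
  · have hpw' : d.Pairwise (fun p q => preceq p q ∨ preceq q p) :=
      (dyck_pairwise hd).imp (fun h => Or.inl h.1)
    have hsym : Symmetric (fun p q : ℕ × ℕ => preceq p q ∨ preceq q p) :=
      fun _ _ h => h.symm
    haveI : Std.Symm (fun p q : ℕ × ℕ => preceq p q ∨ preceq q p) := ⟨fun _ _ h => hsym h⟩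
    exact hpw'.forall hr hs hne

lemma dyck_nodup {n : ℕ} {d : List (ℕ × ℕ)} (hd : IsDyckPath n d) : d.Nodup :=
  (dyck_pairwise hd).imp (fun h he => by rw [he] at h; exact lt_irrefl _ h.2)

open Classical in
lemma card_filter_le_one {n : ℕ} {d : List (ℕ × ℕ)} (hd : IsDyckPath n d) {A : Set (ℕ × ℕ)}
    (hA : IsAntichain preceq A) : (d.toFinset.filter (· ∈ A)).card ≤ 1 := by
  rw [Finset.card_le_one]
  intro x hx y hy
  simp only [Finset.mem_filter, List.mem_toFinset] at hx hy
  by_contra hne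
  rcases mem_comparable hd hx.1 hy.1 with h | h
  · exact hA hx.2 hy.2 hne h
  · exact hA hy.2 hx.2 (Ne.symm hne) h

lemma sval_add (f g : ℕ × ℕ → ℝ) (l : List (ℕ × ℕ)) :
    Sval (fun r => f r + g r) l = Sval f l + Sval g l := by
  induction l with
  | nil => simp [Sval]
  | cons a t ih => simp only [Sval, List.map_cons, List.sum_cons] at *; linarith

lemma sval_sub (f g : ℕ × ℕ → ℝ) (l : List (ℕ × ℕ)) :
    Sval (fun r => f r - g r) l = Sval f l - Sval g l := by
  induction l with
  | nil => simp [Sval]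
  | cons a t ih => simp only [Sval, List.map_cons, List.sum_cons] at *; linarith

lemma sval_lin (c1 c2 : ℝ) (f g : ℕ × ℕ → ℝ) (l : List (ℕ × ℕ)) :
    Sval (fun r => c1 * f r + c2 * g r) l = c1 * Sval f l + c2 * Sval g l := by
  induction l with
  | nil => simp [Sval]
  | cons a t ih => simp only [Sval, List.map_cons, List.sum_cons] at *; rw [ih]; ring

open Classical in
lemma sum_map_chi (A : Set (ℕ × ℕ)) (l : List (ℕ × ℕ)) (h : l.Nodup) :
    Sval (chi A) l = ((l.toFinset.filter (· ∈ A)).card : ℝ) := by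
  unfold Sval
  rw [← List.sum_toFinset _ h]
  simp only [chi, Set.indicator_apply]
  rw [Finset.sum_boole]

open Classical in
lemma key_lemma (n i ca cb : ℕ) (hca : 1 ≤ ca) (hcb : 1 ≤ cb)
    (Ai Ai1 Bi Bi1 : Set (ℕ × ℕ))
    (hanti : IsAntichain preceq Ai) (hanti1 : IsAntichain preceq Ai1)
    (hAiQ : ∀ r ∈ Ai, r.1 ≤ i ∧ i + 1 ≤ r.2)
    (hAi1Q : ∀ r ∈ Ai1, r.1 ≤ i + 1 ∧ i + 2 ≤ r.2)
    (hBiAi : Bi ⊆ Ai) (hBi1Ai1 : Bi1 ⊆ Ai1)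
    (hQBi : ∀ r ∈ Bi, r.1 ≤ i ∧ i + 2 ≤ r.2)
    (hQBi1 : ∀ r ∈ Bi1, r.1 ≤ i ∧ i + 2 ≤ r.2)
    (hBi_def : ∀ r ∈ Bi, ∃ y ∈ Ai1, preceq y r ∧ y ≠ r)
    (hBi1_def : ∀ r ∈ Bi1, ∃ z ∈ Ai, preceq r z ∧ r ≠ z)
    (hBi_full : ∀ r ∈ Ai, (∃ y ∈ Ai1, preceq y r ∧ y ≠ r) → r ∈ Bi)
    (hBi1_full : ∀ r ∈ Ai1, (∃ z ∈ Ai, preceq r z ∧ r ≠ z) → r ∈ Bi1)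
    (d : List (ℕ × ℕ)) (hd : IsDyckPath n d)
    (hSxM : Sval (fun r => (ca : ℝ) * chi Ai r + (cb : ℝ) * chi Ai1 r) d ≤
      (Mval (fun j => if j = i then ca else if j = i + 1 then cb else 0) d : ℝ)) :
    Sval (fun r => (ca : ℝ) * chi Ai r + (cb : ℝ) * chi Ai1 r) d
        + Sval (fun r => chi Bi r - chi Bi1 r) d ≤
      (Mval (fun j => if j = i then ca else if j = i + 1 then cb else 0) d : ℝ) ∧
    Sval (fun r => (ca : ℝ) * chi Ai r + (cb : ℝ) * chi Ai1 r) d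
        - Sval (fun r => chi Bi r - chi Bi1 r) d ≤
      (Mval (fun j => if j = i then ca else if j = i + 1 then cb else 0) d : ℝ) := by
  have hnd : d.Nodup := dyck_nodup hd
  have hSAi := sum_map_chi Ai d hnd
  have hSAi1 := sum_map_chi Ai1 d hnd
  have hSBi := sum_map_chi Bi d hnd
  have hSBi1 := sum_map_chi Bi1 d hnd
  set Ni := (d.toFinset.filter (· ∈ Ai)).card with hNidef
  set Ni1 := (d.toFinset.filter (· ∈ Ai1)).card with hNi1def
  set Ki := (d.toFinset.filter (· ∈ Bi)).card with hKidef
  set Ki1 := (d.toFinset.filter (· ∈ Bi1)).card with hKi1def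
  set Rf := (d.map Prod.fst).toFinset with hRfdef
  have hSx : Sval (fun r => (ca : ℝ) * chi Ai r + (cb : ℝ) * chi Ai1 r) d
      = (ca : ℝ) * Ni + (cb : ℝ) * Ni1 := by
    rw [sval_lin, hSAi, hSAi1]
  have hSv : Sval (fun r => chi Bi r - chi Bi1 r) d = (Ki : ℝ) - (Ki1 : ℝ) := by
    rw [sval_sub, hSBi, hSBi1]
  have hMn : Mval (fun j => if j = i then ca else if j = i + 1 then cb else 0) d
      = (if i ∈ Rf then ca else 0) + (if i + 1 ∈ Rf then cb else 0) := by
    unfold Mval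
    have h1 : ∀ j, (if j = i then ca else if j = i + 1 then cb else 0)
        = (if j = i then ca else 0) + (if j = i + 1 then cb else 0) := by
      intro j; split_ifs <;> omega
    simp_rw [h1]
    rw [Finset.sum_add_distrib, Finset.sum_ite_eq' Rf i (fun _ => ca),
      Finset.sum_ite_eq' Rf (i + 1) (fun _ => cb)]
  have hNile : Ni ≤ 1 := card_filter_le_one hd hanti
  have hNi1le : Ni1 ≤ 1 := card_filter_le_one hd hanti1
  have hKile : Ki ≤ 1 := card_filter_le_one hd (hanti.subset hBiAi)
  have hKi1le : Ki1 ≤ 1 := card_filter_le_one hd (hanti1.subset hBi1Ai1)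
  have hNi_row : 0 < Ni → i ∈ Rf := by
    intro h
    obtain ⟨r, hr⟩ := Finset.card_pos.mp h
    simp only [Finset.mem_filter, List.mem_toFinset] at hr
    obtain ⟨h2, h3⟩ := hAiQ r hr.2
    exact row_mem hd hr.1 h2 h3
  have hNi1_row : 0 < Ni1 → i + 1 ∈ Rf := by
    intro h
    obtain ⟨r, hr⟩ := Finset.card_pos.mp h
    simp only [Finset.mem_filter, List.mem_toFinset] at hr
    obtain ⟨h2, h3⟩ := hAi1Q r hr.2
    exact row_mem hd hr.1 h2 h3
  by_cases htight : (i ∈ Rf → 0 < Ni) ∧ (i + 1 ∈ Rf → 0 < Ni1)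
  · -- tight case : Ki = Ki1, so Sval v d = 0
    have h1 : 0 < Ki → 0 < Ki1 := by
      intro h
      obtain ⟨r, hr⟩ := Finset.card_pos.mp h
      simp only [Finset.mem_filter, List.mem_toFinset] at hr
      obtain ⟨y0, hy0, hy0r, hy0ne⟩ := hBi_def r hr.2
      obtain ⟨q1, q2⟩ := hQBi r hr.2
      have hrow : i + 1 ∈ Rf := row_mem hd hr.1 (by omega) (by omega)
      obtain ⟨y, hy⟩ := Finset.card_pos.mp (htight.2 hrow)
      simp only [Finset.mem_filter, List.mem_toFinset] at hy
      have hyne_r : y ≠ r := by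
        rintro rfl; exact hanti1 hy0 hy.2 hy0ne hy0r
      have hyr : preceq y r := by
        rcases mem_comparable hd hy.1 hr.1 with h' | h'
        · exact h'
        · exfalso
          rcases eq_or_ne y0 y with rfl | hne2
          · exact hy0ne (Prod.ext (le_antisymm hy0r.1 h'.1) (le_antisymm hy0r.2 h'.2))
          · exact hanti1 hy0 hy.2 hne2 ⟨le_trans hy0r.1 h'.1, le_trans hy0r.2 h'.2⟩
      apply Finset.card_pos.mpr
      exact ⟨y, Finset.mem_filter.mpr ⟨List.mem_toFinset.mpr hy.1,
        hBi1_full y hy.2 ⟨r, hBiAi hr.2, hyr, hyne_r⟩⟩⟩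
    have h2 : 0 < Ki1 → 0 < Ki := by
      intro h
      obtain ⟨r, hr⟩ := Finset.card_pos.mp h
      simp only [Finset.mem_filter, List.mem_toFinset] at hr
      obtain ⟨z0, hz0, hrz0, hrz0ne⟩ := hBi1_def r hr.2
      obtain ⟨q1, q2⟩ := hQBi1 r hr.2
      have hrow : i ∈ Rf := row_mem hd hr.1 (by omega) (by omega)
      obtain ⟨z, hz⟩ := Finset.card_pos.mp (htight.1 hrow)
      simp only [Finset.mem_filter, List.mem_toFinset] at hz
      have hzne_r : z ≠ r := by
        rintro rfl; exact hanti hz.2 hz0 hrz0ne hrz0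
      have hrz : preceq r z := by
        rcases mem_comparable hd hr.1 hz.1 with h' | h'
        · exact h'
        · exfalso
          rcases eq_or_ne z z0 with rfl | hne2
          · exact hzne_r (Prod.ext (le_antisymm h'.1 hrz0.1) (le_antisymm h'.2 hrz0.2))
          · exact hanti hz.2 hz0 hne2 ⟨le_trans h'.1 hrz0.1, le_trans h'.2 hrz0.2⟩
      apply Finset.card_pos.mpr
      exact ⟨z, Finset.mem_filter.mpr ⟨List.mem_toFinset.mpr hz.1,
        hBi_full z hz.2 ⟨r, hBi1Ai1 hr.2, hrz, Ne.symm hzne_r⟩⟩⟩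
    have hKK : Ki = Ki1 := by omega
    have hSv0 : Sval (fun r => chi Bi r - chi Bi1 r) d = 0 := by rw [hSv, hKK]; ring
    constructor <;> rw [hSv0] <;> linarith
  · -- slack case
    have hb1 : ca * Ni ≤ (if i ∈ Rf then ca else 0) := by
      rcases Nat.eq_zero_or_pos Ni with h0 | h0
      · simp [h0]
      · rw [if_pos (hNi_row h0)]
        have he : Ni = 1 := by omega
        simp [he]
    have hb2 : cb * Ni1 ≤ (if i + 1 ∈ Rf then cb else 0) := by
      rcases Nat.eq_zero_or_pos Ni1 with h0 | h0
      · simp [h0]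
      · rw [if_pos (hNi1_row h0)]
        have he : Ni1 = 1 := by omega
        simp [he]
    have hextra : (ca * Ni + 1 ≤ (if i ∈ Rf then ca else 0)) ∨
        (cb * Ni1 + 1 ≤ (if i + 1 ∈ Rf then cb else 0)) := by
      rcases not_and_or.mp htight with h | h <;> rw [Classical.not_imp] at h
      · left
        have h0 : Ni = 0 := by omega
        rw [if_pos h.1, h0]
        simpa using hca
      · right
        have h0 : Ni1 = 0 := by omega
        rw [if_pos h.1, h0]
        simpa using hcb
    have hIneq : ca * Ni + cb * Ni1 + 1
        ≤ Mval (fun j => if j = i then ca else if j = i + 1 then cb else 0) d := by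
      rw [hMn]
      rcases hextra with h | h
      · have := Nat.add_le_add h hb2; omega
      · have := Nat.add_le_add hb1 h; omega
    have hIneqR : (ca : ℝ) * Ni + (cb : ℝ) * Ni1 + 1
        ≤ (Mval (fun j => if j = i then ca else if j = i + 1 then cb else 0) d : ℝ) := by
      exact_mod_cast hIneq
    have hKiR : (0 : ℝ) ≤ (Ki : ℝ) ∧ (Ki : ℝ) ≤ 1 :=
      ⟨Nat.cast_nonneg _, by exact_mod_cast hKile⟩
    have hKi1R : (0 : ℝ) ≤ (Ki1 : ℝ) ∧ (Ki1 : ℝ) ≤ 1 :=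
      ⟨Nat.cast_nonneg _, by exact_mod_cast hKi1le⟩
    rw [hSx, hSv]
    constructor <;> linarith [hKiR.1, hKiR.2, hKi1R.1, hKi1R.2]

/-- if `a_iχ_{A_i} + a_{i+1}χ_{A_{i+1}}` is a vertex of
`P_{a_iω_i + a_{i+1}ω_{i+1}}`, then comparable elements of `A_i` and `A_{i+1}`
compare in the expected direction. -/
theorem comparable_elements_of_vertex (n : ℕ) (hn : 2 ≤ n) (a : ℕ → ℕ) (i : ℕ)
    (hi1 : 1 ≤ i) (hi2 : i ≤ n - 2) (hai : 1 ≤ a i) (hai1 : 1 ≤ a (i + 1))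
    (Ai Ai1 : Set (ℕ × ℕ)) (hAi : Ai ⊆ Qset n i) (hAi1 : Ai1 ⊆ Qset n (i + 1))
    (hanti : IsAntichain preceq Ai) (hanti1 : IsAntichain preceq Ai1)
    (hvert : (fun p => (a i : ℝ) * chi Ai p + (a (i + 1) : ℝ) * chi Ai1 p) ∈
        Set.extremePoints ℝ
          (FFLV n fun j => if j = i then a i else if j = i + 1 then a (i + 1) else 0))
    (p q : ℕ × ℕ) (hp : p ∈ Ai) (hq : q ∈ Ai1) (hcomp : preceq p q ∨ preceq q p) :
    preceq p q := by
  classical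
  by_contra hpq
  have hqp : preceq q p := by
    rcases hcomp with h | h
    · exact absurd h hpq
    · exact h
  have hne : q ≠ p := by rintro rfl; exact hpq ⟨le_refl _, le_refl _⟩
  set a' : ℕ → ℕ := fun j => if j = i then a i else if j = i + 1 then a (i + 1) else 0 with ha'
  set x : ℕ × ℕ → ℝ := fun r => (a i : ℝ) * chi Ai r + (a (i + 1) : ℝ) * chi Ai1 r with hxdef
  have hxP : x ∈ FFLV n a' := hvert.1
  set Bi : Set (ℕ × ℕ) := {r | r ∈ Ai ∧ ∃ y ∈ Ai1, preceq y r ∧ y ≠ r} with hBidef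
  set Bi1 : Set (ℕ × ℕ) := {r | r ∈ Ai1 ∧ ∃ z ∈ Ai, preceq r z ∧ r ≠ z} with hBi1def
  have hBiAi : Bi ⊆ Ai := fun r hr => hr.1
  have hBi1Ai1 : Bi1 ⊆ Ai1 := fun r hr => hr.1
  have hBi1_not : ∀ r ∈ Bi1, r ∉ Ai := by
    rintro r ⟨hrAi1, z, hz, hrz, hrzne⟩ hrAi
    exact hanti hrAi hz hrzne hrz
  have hQBi : ∀ r ∈ Bi, 1 ≤ r.1 ∧ r.1 ≤ i ∧ i + 2 ≤ r.2 ∧ r.2 ≤ n := by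
    rintro r ⟨hrAi, y, hy, hyr, _⟩
    obtain ⟨h1, h2, h3, h4⟩ := hAi hrAi
    obtain ⟨g1, g2, g3, g4⟩ := hAi1 hy
    exact ⟨h1, h2, le_trans g3 hyr.2, h4⟩
  have hQBi1 : ∀ r ∈ Bi1, 1 ≤ r.1 ∧ r.1 ≤ i ∧ i + 2 ≤ r.2 ∧ r.2 ≤ n := by
    rintro r ⟨hrAi1, z, hz, hrz, _⟩
    obtain ⟨h1, h2, h3, h4⟩ := hAi1 hrAi1
    obtain ⟨g1, g2, g3, g4⟩ := hAi hz
    exact ⟨h1, le_trans hrz.1 g2, h3, h4⟩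
  have key : ∀ d, IsDyckPath n d →
      Sval x d + Sval (fun r => chi Bi r - chi Bi1 r) d ≤ (Mval a' d : ℝ) ∧
      Sval x d - Sval (fun r => chi Bi r - chi Bi1 r) d ≤ (Mval a' d : ℝ) := by
    intro d hd
    exact key_lemma n i (a i) (a (i + 1)) hai hai1 Ai Ai1 Bi Bi1 hanti hanti1
      (fun r hr => ⟨(hAi hr).2.1, (hAi hr).2.2.1⟩)
      (fun r hr => ⟨(hAi1 hr).2.1, (hAi1 hr).2.2.1⟩)
      hBiAi hBi1Ai1
      (fun r hr => ⟨(hQBi r hr).2.1, (hQBi r hr).2.2.1⟩)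
      (fun r hr => ⟨(hQBi1 r hr).2.1, (hQBi1 r hr).2.2.1⟩)
      (fun r hr => hr.2) (fun r hr => hr.2)
      (fun r hr h => ⟨hr, h⟩) (fun r hr h => ⟨hr, h⟩)
      d hd (hxP.2.2 d hd)
  have hchi01 : ∀ (A : Set (ℕ × ℕ)) (r : ℕ × ℕ), chi A r = if r ∈ A then (1 : ℝ) else 0 :=
    fun A r => Set.indicator_apply _ _ _
  have hvcases : ∀ r, (chi Bi r - chi Bi1 r = 0) ∨
      (chi Bi r - chi Bi1 r = 1 ∧ r ∈ Bi) ∨ (chi Bi r - chi Bi1 r = -1 ∧ r ∈ Bi1) := by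
    intro r
    by_cases h1 : r ∈ Bi <;> by_cases h2 : r ∈ Bi1 <;>
      rw [hchi01, hchi01] <;> simp [h1, h2]
  have hxgei : ∀ r ∈ Ai, (1 : ℝ) ≤ x r := by
    intro r hr
    have h1 : (1 : ℝ) ≤ (a i : ℝ) := by exact_mod_cast hai
    have h2 : (0 : ℝ) ≤ (a (i + 1) : ℝ) * chi Ai1 r := by
      rw [hchi01]; split_ifs <;> simp
    show (1 : ℝ) ≤ (a i : ℝ) * chi Ai r + (a (i + 1) : ℝ) * chi Ai1 r
    rw [hchi01 Ai, if_pos hr]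
    linarith
  have hxgei1 : ∀ r ∈ Ai1, (1 : ℝ) ≤ x r := by
    intro r hr
    have h1 : (1 : ℝ) ≤ (a (i + 1) : ℝ) := by exact_mod_cast hai1
    have h2 : (0 : ℝ) ≤ (a i : ℝ) * chi Ai r := by
      rw [hchi01]; split_ifs <;> simp
    show (1 : ℝ) ≤ (a i : ℝ) * chi Ai r + (a (i + 1) : ℝ) * chi Ai1 r
    rw [hchi01 Ai1, if_pos hr]
    linarith
  have hy : (fun r => x r + (chi Bi r - chi Bi1 r)) ∈ FFLV n a' := by
    refine ⟨?_, ?_, ?_⟩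
    · intro r hr
      have hx0 : x r = 0 := hxP.1 r hr
      have hv0 : chi Bi r - chi Bi1 r = 0 := by
        rcases hvcases r with h | ⟨h, hm⟩ | ⟨h, hm⟩
        · exact h
        · obtain ⟨g1, g2, g3, g4⟩ := hQBi r hm
          exact absurd ⟨g1, by omega, g4⟩ hr
        · obtain ⟨g1, g2, g3, g4⟩ := hQBi1 r hm
          exact absurd ⟨g1, by omega, g4⟩ hr
      show x r + (chi Bi r - chi Bi1 r) = 0
      rw [hx0, hv0]; ring
    · intro r
      show 0 ≤ x r + (chi Bi r - chi Bi1 r)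
      rcases hvcases r with h | ⟨h, hm⟩ | ⟨h, hm⟩
      · rw [h]; simpa using hxP.2.1 r
      · have := hxP.2.1 r; rw [h]; linarith
      · have := hxgei1 r (hBi1Ai1 hm); rw [h]; linarith
    · intro d hd
      rw [sval_add]
      exact (key d hd).1
  have hz : (fun r => x r - (chi Bi r - chi Bi1 r)) ∈ FFLV n a' := by
    refine ⟨?_, ?_, ?_⟩
    · intro r hr
      have hx0 : x r = 0 := hxP.1 r hr
      have hv0 : chi Bi r - chi Bi1 r = 0 := by
        rcases hvcases r with h | ⟨h, hm⟩ | ⟨h, hm⟩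
        · exact h
        · obtain ⟨g1, g2, g3, g4⟩ := hQBi r hm
          exact absurd ⟨g1, by omega, g4⟩ hr
        · obtain ⟨g1, g2, g3, g4⟩ := hQBi1 r hm
          exact absurd ⟨g1, by omega, g4⟩ hr
      show x r - (chi Bi r - chi Bi1 r) = 0
      rw [hx0, hv0]; ring
    · intro r
      show 0 ≤ x r - (chi Bi r - chi Bi1 r)
      rcases hvcases r with h | ⟨h, hm⟩ | ⟨h, hm⟩
      · rw [h]; simpa using hxP.2.1 r
      · have := hxgei r (hBiAi hm); rw [h]; linarith
      · have := hxP.2.1 r; rw [h]; linarith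
    · intro d hd
      have hsub : Sval (fun r => x r - (chi Bi r - chi Bi1 r)) d
          = Sval x d - Sval (fun r => chi Bi r - chi Bi1 r) d := sval_sub _ _ _
      rw [hsub]
      exact (key d hd).2
  have hseg : x ∈ openSegment ℝ (fun r => x r + (chi Bi r - chi Bi1 r))
      (fun r => x r - (chi Bi r - chi Bi1 r)) := by
    refine ⟨1/2, 1/2, by norm_num, by norm_num, by norm_num, ?_⟩
    funext r
    show (1/2 : ℝ) * (x r + (chi Bi r - chi Bi1 r)) + (1/2 : ℝ) * (x r - (chi Bi r - chi Bi1 r)) = x r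
    ring
  have hcontra := hvert.2 hy hz hseg
  have hpBi : p ∈ Bi := ⟨hp, q, hq, hqp, hne⟩
  have hpBi1 : p ∉ Bi1 := fun hc => hBi1_not p hc hp
  have hvp : chi Bi p - chi Bi1 p = 1 := by
    rw [hchi01, hchi01, if_pos hpBi, if_neg hpBi1]; ring
  have hfin : x p + (chi Bi p - chi Bi1 p) = x p := congrFun hcontra p
  rw [hvp] at hfin
  linarith
end

section
/- Let E ∈ R_p and let d be a Dyck path having a peak (i,j). Then S(x(E),d) − x(E)_{i,j} ≤ M(λ,d); if moreover λ is regular, then this inequality is strict. -/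
open Finset

/-- The Dyck path `d^{i,j} = ((i,i+1),…,(i,j),(i+1,j),…,(j-1,j))`. -/
def dseg (i j : ℕ) : List (ℕ × ℕ) :=
  ((List.range (j - i)).map fun t => (i, i + 1 + t)) ++
  ((List.range (j - i - 1)).map fun t => (i + 1 + t, j))

/-- `x` is the point `x(E)`: it vanishes outside `E` and for `[i,j] ∈ E` one has
`S(x(E),d^{i,j}) = a_i + … + a_{j-1}`. -/
def IsXE (n : ℕ) (a : ℕ → ℕ) (E : Finset (ℕ × ℕ)) (x : ℕ × ℕ → ℝ) : Prop :=
  (∀ p, p ∉ E → x p = 0) ∧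
  ∀ p ∈ E, Sval x (dseg p.1 p.2) = ∑ k ∈ Finset.Ico p.1 p.2, (a k : ℝ)

/-- `E ∈ R_p`: a set of segments (encoded by their endpoint pairs) inside `[1,n]` such that
the (nonempty) intersection of any two of its segments is a positive-length segment of `E`. -/
def Rp (n : ℕ) (E : Finset (ℕ × ℕ)) : Prop :=
  (∀ p ∈ E, ValidPair n p) ∧
  ∀ p ∈ E, ∀ q ∈ E, max p.1 q.1 ≤ min p.2 q.2 →
    max p.1 q.1 < min p.2 q.2 ∧ (max p.1 q.1, min p.2 q.2) ∈ E

/-- `p` is a peak of the Dyck path `d`. -/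
def IsPeak (d : List (ℕ × ℕ)) (p : ℕ × ℕ) : Prop :=
  p ∈ d ∧ (p.1, p.2 - 1) ∈ d ∧ (p.1 + 1, p.2) ∈ d

/-- `p` is a valley of the Dyck path `d`. -/
def IsValley (d : List (ℕ × ℕ)) (p : ℕ × ℕ) : Prop :=
  p ∈ d ∧ (p.1 - 1, p.2) ∈ d ∧ (p.1, p.2 + 1) ∈ d


def subFilter (E : Finset (ℕ × ℕ)) (s : ℕ × ℕ) : Finset (ℕ × ℕ) :=
  E.filter fun t => (t.1 = s.1 ∨ t.2 = s.2) ∧ s.1 ≤ t.1 ∧ t.2 ≤ s.2 ∧ t.1 < t.2 ∧ t ≠ s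

lemma mem_subFilter {E : Finset (ℕ × ℕ)} {s t : ℕ × ℕ} :
    t ∈ subFilter E s ↔ t ∈ E ∧ (t.1 = s.1 ∨ t.2 = s.2) ∧ s.1 ≤ t.1 ∧ t.2 ≤ s.2 ∧
      t.1 < t.2 ∧ t ≠ s := by
  simp [subFilter, mem_filter]

lemma subFilter_len {E : Finset (ℕ × ℕ)} {s t : ℕ × ℕ} (h : t ∈ subFilter E s) :
    t.2 - t.1 < s.2 - s.1 := by
  rw [mem_subFilter] at h
  obtain ⟨-, he, h1, h2, h3, h4⟩ := h
  have : ¬ (t.1 = s.1 ∧ t.2 = s.2) := fun ⟨u, v⟩ => h4 (Prod.ext u v)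
  rcases he with he | he <;> omega

def Kset (E : Finset (ℕ × ℕ)) (s : ℕ × ℕ) : Finset ℕ :=
  (Finset.Ico s.1 s.2) \ ((subFilter E s).attach.biUnion fun t => Kset E t.1)
termination_by s.2 - s.1
decreasing_by exact subFilter_len t.2

lemma Kset_eq (E : Finset (ℕ × ℕ)) (s : ℕ × ℕ) :
    Kset E s = (Finset.Ico s.1 s.2) \ ((subFilter E s).biUnion (Kset E)) := by
  rw [Kset]; congr 1; ext m; simp [Finset.mem_biUnion]

lemma Kset_subset (E : Finset (ℕ × ℕ)) (s : ℕ × ℕ) : Kset E s ⊆ Finset.Ico s.1 s.2 := by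
  rw [Kset_eq]; exact Finset.sdiff_subset

/-- if `t` is a proper endpoint-sharing subsegment of `s`, their K-sets are disjoint -/
lemma Kset_disj_sub {E : Finset (ℕ × ℕ)} {s t : ℕ × ℕ} (h : t ∈ subFilter E s) {m : ℕ}
    (hm : m ∈ Kset E t) (hm' : m ∈ Kset E s) : False := by
  rw [Kset_eq, Finset.mem_sdiff] at hm'
  exact hm'.2 (Finset.mem_biUnion.2 ⟨t, h, hm⟩)

/-- a point of `Ico s.1 s.2` not in `Kset E s` lies in the K-set of some subsegment. -/
lemma Kset_cover {E : Finset (ℕ × ℕ)} {s : ℕ × ℕ} {m : ℕ} (h1 : m ∈ Finset.Ico s.1 s.2)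
    (h2 : m ∉ Kset E s) : ∃ t ∈ subFilter E s, m ∈ Kset E t := by
  rw [Kset_eq, Finset.mem_sdiff] at h2
  push_neg at h2
  exact Finset.mem_biUnion.1 (h2 h1)

/-- overlap disjointness: for properly overlapping segments of `E`, K-sets are disjoint. -/
lemma Kset_disj_overlap {n : ℕ} {E : Finset (ℕ × ℕ)} (hE : Rp n E) {u v u' v' : ℕ}
    (h1 : (u, v) ∈ E) (h2 : (u', v') ∈ E) (huu : u < u') (hvv : v < v') (hov : u' < v)
    {m : ℕ} (hm : m ∈ Kset E (u, v)) (hm' : m ∈ Kset E (u', v')) : False := by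
  have hr : (u', v) ∈ E := by
    have := hE.2 _ h1 _ h2 (by simp; omega)
    have e : (max u u', min v v') = (u', v) := by
      simp only [Prod.mk.injEq]; constructor <;> omega
    rw [e] at this; exact this.2
  -- r = (u',v) is in subFilter of (u,v)
  have hrt : (u', v) ∈ subFilter E (u, v) := by
    rw [mem_subFilter]
    refine ⟨hr, Or.inr rfl, by omega, le_refl _, hov, ?_⟩
    simp only [ne_eq, Prod.mk.injEq]; omega
  -- m ∈ Ico u' v
  have hmI : m ∈ Finset.Ico u' v := by
    have a := Kset_subset E (u, v) hm
    have b := Kset_subset E (u', v') hm'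
    simp only [Finset.mem_Ico] at a b ⊢
    exact ⟨b.1, a.2⟩
  have hmr : m ∉ Kset E (u', v) := fun hmr => Kset_disj_sub hrt hmr hm
  obtain ⟨w, hw, hmw⟩ := Kset_cover hmI hmr
  rw [mem_subFilter] at hw
  obtain ⟨hwE, hwe, hw1, hw2, hw3, hw4⟩ := hw
  rcases hwe with hwe | hwe
  · -- w.1 = u' : w is a left subsegment of (u',v')
    have : w ∈ subFilter E (u', v') := by
      rw [mem_subFilter]
      exact ⟨hwE, Or.inl hwe, by omega, by omega, hw3, by
        simp only [ne_eq, Prod.ext_iff] at hw4 ⊢; omega⟩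
    exact Kset_disj_sub this hmw hm'
  · -- w.2 = v : w is a right subsegment of (u,v)
    have : w ∈ subFilter E (u, v) := by
      rw [mem_subFilter]
      refine ⟨hwE, Or.inr hwe, by omega, by omega, hw3, ?_⟩
      simp only [ne_eq, Prod.ext_iff] at hw4 ⊢
      intro ⟨e1, e2⟩; omega
    exact Kset_disj_sub this hmw hm

/-- K-sets of two distinct segments comparable in both coordinates are disjoint. -/
lemma Kset_disj_pair {n : ℕ} {E : Finset (ℕ × ℕ)} (hE : Rp n E) {t t' : ℕ × ℕ}
    (ht : t ∈ E) (ht' : t' ∈ E) (hne : t ≠ t') (h1 : t.1 ≤ t'.1) (h2 : t.2 ≤ t'.2)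
    {m : ℕ} (hm : m ∈ Kset E t) (hm' : m ∈ Kset E t') : False := by
  have htv : t.1 < t.2 := (hE.1 t ht).2.1
  have ht'v : t'.1 < t'.2 := (hE.1 t' ht').2.1
  by_cases e1 : t.1 = t'.1
  · -- t left-sub of t'
    have : t ∈ subFilter E t' := by
      rw [mem_subFilter]; exact ⟨ht, Or.inl e1, e1.ge, h2, htv, hne⟩
    exact Kset_disj_sub this hm hm'
  by_cases e2 : t.2 = t'.2
  · have : t' ∈ subFilter E t := by
      rw [mem_subFilter]
      refine ⟨ht', Or.inr e2.symm, h1, le_of_eq e2.symm, ht'v, ?_⟩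
      exact hne.symm
    exact Kset_disj_sub this hm' hm
  · have hlt1 : t.1 < t'.1 := lt_of_le_of_ne h1 e1
    have hlt2 : t.2 < t'.2 := lt_of_le_of_ne h2 e2
    by_cases hov : t'.1 < t.2
    · exact Kset_disj_overlap hE (u := t.1) (v := t.2) (u' := t'.1) (v' := t'.2)
        (by simpa using ht) (by simpa using ht') hlt1 hlt2 hov (by simpa using hm)
        (by simpa using hm')
    · -- segments disjoint
      have a := Kset_subset E t hm
      have b := Kset_subset E t' hm'
      simp only [Finset.mem_Ico] at a b
      omega

/-- K-sets of segments of `E` are nonempty. -/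
lemma Kset_nonempty {n : ℕ} {E : Finset (ℕ × ℕ)} (hE : Rp n E) :
    ∀ (N : ℕ) (s : ℕ × ℕ), s ∈ E → s.2 - s.1 ≤ N → (Kset E s).Nonempty := by
  intro N
  induction N with
  | zero => intro s hs hN; have := (hE.1 s hs).2.1; omega
  | succ N ih =>
    intro s hs hN
    by_contra hempty
    rw [Finset.not_nonempty_iff_eq_empty] at hempty
    have hsv : s.1 < s.2 := (hE.1 s hs).2.1
    have hcov : ∀ m ∈ Finset.Ico s.1 s.2, ∃ t ∈ subFilter E s, m ∈ Kset E t := by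
      intro m hm
      exact Kset_cover hm (by rw [hempty]; exact Finset.notMem_empty m)
    -- s.1 is covered by a left subsegment
    obtain ⟨tL0, htL0, hmL0⟩ := hcov s.1 (by simp [Finset.mem_Ico]; omega)
    have htL0l : tL0.1 = s.1 := by
      have := Kset_subset E tL0 hmL0
      have h2 := (mem_subFilter.1 htL0).2.2.1
      simp only [Finset.mem_Ico] at this; omega
    -- s.2 - 1 is covered by a right subsegment
    obtain ⟨tR0, htR0, hmR0⟩ := hcov (s.2 - 1) (by simp [Finset.mem_Ico]; omega)
    have htR0r : tR0.2 = s.2 := by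
      have := Kset_subset E tR0 hmR0
      have h2 := (mem_subFilter.1 htR0).2.2.2.1
      simp only [Finset.mem_Ico] at this; omega
    -- the sets of left and right subsegments
    classical
    set L := (subFilter E s).filter (fun t => t.1 = s.1) with hL
    set R := (subFilter E s).filter (fun t => t.2 = s.2) with hR
    have hLne : L.Nonempty := ⟨tL0, Finset.mem_filter.2 ⟨htL0, htL0l⟩⟩
    have hRne : R.Nonempty := ⟨tR0, Finset.mem_filter.2 ⟨htR0, htR0r⟩⟩
    have hLRcov : ∀ t ∈ subFilter E s, t ∈ L ∨ t ∈ R := by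
      intro t ht
      rcases (mem_subFilter.1 ht).2.1 with h | h
      · exact Or.inl (Finset.mem_filter.2 ⟨ht, h⟩)
      · exact Or.inr (Finset.mem_filter.2 ⟨ht, h⟩)
    obtain ⟨tL, htL, hkmax⟩ := L.exists_max_image (·.2) hLne
    obtain ⟨tR, htR, hkmin⟩ := R.exists_min_image (·.1) hRne
    set khat := tL.2 with hkhat
    set icheck := tR.1 with hicheck
    have htLs : tL ∈ subFilter E s := (Finset.mem_filter.1 htL).1
    have htRs : tR ∈ subFilter E s := (Finset.mem_filter.1 htR).1
    have htL1 : tL.1 = s.1 := (Finset.mem_filter.1 htL).2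
    have htR2 : tR.2 = s.2 := (Finset.mem_filter.1 htR).2
    obtain ⟨htLE, -, -, htL2, htLv, htLne⟩ := mem_subFilter.1 htLs
    obtain ⟨htRE, -, htR1, -, htRv, htRne⟩ := mem_subFilter.1 htRs
    have hkhat2 : khat < s.2 := by
      rcases lt_or_eq_of_le htL2 with h | h
      · exact h
      · exact absurd (Prod.ext htL1 h) htLne
    have hich1 : s.1 < icheck := by
      rcases lt_or_eq_of_le htR1 with h | h
      · exact h
      · exact absurd (Prod.ext h.symm htR2) htRne
    by_cases hord : khat < icheck
    · -- khat is not covered: contradiction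
      obtain ⟨w, hw, hmw⟩ := hcov khat (by simp [Finset.mem_Ico]; omega)
      have hwmem := Kset_subset E w hmw
      simp only [Finset.mem_Ico] at hwmem
      rcases hLRcov w hw with hwL | hwR
      · exact absurd hwmem.2 (not_lt.2 (hkmax w hwL))
      · have := hkmin w hwR; omega
    · -- r = (icheck, khat) ∈ E
      push_neg at hord
      have hrE : (icheck, khat) ∈ E ∧ icheck < khat := by
        have := hE.2 tL htLE tR htRE (by omega)
        have e : (max tL.1 tR.1, min tL.2 tR.2) = (icheck, khat) := by
          simp only [Prod.mk.injEq]; constructor <;> omega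
        rw [e] at this
        refine ⟨this.2, ?_⟩
        have h2 := this.1
        omega
      obtain ⟨m, hm⟩ := ih (icheck, khat) hrE.1 (by simp; omega)
      have hmI := Kset_subset _ _ hm
      simp only [Finset.mem_Ico] at hmI
      -- m is covered by some w in subFilter E s
      obtain ⟨w, hw, hmw⟩ := hcov m (by simp [Finset.mem_Ico]; omega)
      obtain ⟨hwE, hwe, hw1, hw2, hwv, hwne⟩ := mem_subFilter.1 hw
      rcases hLRcov w hw with hwL | hwR
      · -- w = (s.1, w.2), w.2 ≤ khat
        have hwl : w.1 = s.1 := (Finset.mem_filter.1 hwL).2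
        have hwb : w.2 ≤ khat := hkmax w hwL
        rcases eq_or_lt_of_le hwb with he | hlt
        · -- w.2 = khat : r is right-sub of w
          have : (icheck, khat) ∈ subFilter E w := by
            rw [mem_subFilter]
            refine ⟨hrE.1, Or.inr he.symm, by omega, by simp [he], hrE.2, ?_⟩
            simp only [ne_eq, Prod.ext_iff, not_and]
            intro h1; omega
          exact Kset_disj_sub this hm hmw
        · by_cases hcase : w.2 ≤ icheck
          · have := Kset_subset E w hmw
            simp only [Finset.mem_Ico] at this; omega
          · -- proper overlap w=(s.1,w.2) and (icheck,khat)
            push_neg at hcase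
            exact Kset_disj_overlap hE (u := w.1) (v := w.2) (u' := icheck) (v' := khat)
              (by simpa using hwE) hrE.1 (by omega) hlt (by omega)
              (by simpa using hmw) hm
      · -- w = (w.1, s.2), w.1 ≥ icheck
        have hwr : w.2 = s.2 := (Finset.mem_filter.1 hwR).2
        have hwb : icheck ≤ w.1 := hkmin w hwR
        rcases eq_or_lt_of_le hwb with he | hlt
        · -- w.1 = icheck : r is left-sub of w
          have : (icheck, khat) ∈ subFilter E w := by
            rw [mem_subFilter]
            refine ⟨hrE.1, Or.inl he, by simp [he], by omega, hrE.2, ?_⟩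
            simp only [ne_eq, Prod.ext_iff, not_and]
            intro h1; omega
          exact Kset_disj_sub this hm hmw
        · by_cases hcase : khat ≤ w.1
          · have := Kset_subset E w hmw
            simp only [Finset.mem_Ico] at this; omega
          · push_neg at hcase
            exact Kset_disj_overlap hE (u := icheck) (v := khat) (u' := w.1) (v' := w.2)
              hrE.1 (by simpa using hwE) hlt (by omega) hcase
              hm (by simpa using hmw)

lemma list_range_map_sum (n : ℕ) (f : ℕ → ℝ) :
    ((List.range n).map f).sum = ∑ t ∈ Finset.range n, f t := by
  induction n with
  | zero => simp
  | succ n ih => rw [List.range_succ, Finset.sum_range_succ, List.map_append, List.sum_append, ih]; simp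

lemma Sval_dseg {x : ℕ × ℕ → ℝ} {i j : ℕ} (hij : i < j) :
    Sval x (dseg i j) = (∑ k ∈ Finset.Ico (i+1) j, x (i, k)) + x (i, j)
      + ∑ l ∈ Finset.Ico (i+1) j, x (l, j) := by
  rw [Sval, dseg, List.map_append, List.sum_append, List.map_map, List.map_map,
    list_range_map_sum, list_range_map_sum]
  have e1 : ∑ t ∈ Finset.range (j - i), (x ∘ fun t => (i, i + 1 + t)) t
      = ∑ k ∈ Finset.Ico (i+1) (j+1), x (i, k) := by
    rw [Finset.sum_Ico_eq_sum_range]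
    have : j + 1 - (i + 1) = j - i := by omega
    rw [this]
    exact Finset.sum_congr rfl fun t ht => by simp [add_comm, add_assoc, add_left_comm]
  have e2 : ∑ t ∈ Finset.range (j - i - 1), (x ∘ fun t => (i + 1 + t, j)) t
      = ∑ l ∈ Finset.Ico (i+1) j, x (l, j) := by
    rw [Finset.sum_Ico_eq_sum_range]
    have : j - (i + 1) = j - i - 1 := by omega
    rw [this]
    exact Finset.sum_congr rfl fun t ht => by simp [add_comm, add_assoc, add_left_comm]
  rw [e1, e2, Finset.sum_Ico_succ_top (by omega : i + 1 ≤ j)]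

lemma pairwiseDisjoint_subFilter {n : ℕ} {E : Finset (ℕ × ℕ)} (hE : Rp n E) (s : ℕ × ℕ) :
    (↑(subFilter E s) : Set (ℕ × ℕ)).PairwiseDisjoint (Kset E) := by
  intro t ht t' ht' hne
  simp only [Finset.mem_coe] at ht ht'
  obtain ⟨htE, hte, ht1, ht2, htv, -⟩ := mem_subFilter.1 ht
  obtain ⟨ht'E, ht'e, ht'1, ht'2, ht'v, -⟩ := mem_subFilter.1 ht'
  have hcomp : (t.1 ≤ t'.1 ∧ t.2 ≤ t'.2) ∨ (t'.1 ≤ t.1 ∧ t'.2 ≤ t.2) := by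
    rcases hte with h | h <;> rcases ht'e with h' | h' <;> omega
  simp only [Function.onFun]
  rw [Finset.disjoint_left]
  intro m hm hm'
  rcases hcomp with ⟨h1, h2⟩ | ⟨h1, h2⟩
  · exact Kset_disj_pair hE htE ht'E hne h1 h2 hm hm'
  · exact Kset_disj_pair hE ht'E htE (Ne.symm hne) h1 h2 hm' hm

lemma biUnion_subFilter_subset {E : Finset (ℕ × ℕ)} (s : ℕ × ℕ) :
    (subFilter E s).biUnion (Kset E) ⊆ Finset.Ico s.1 s.2 := by
  intro m hm
  obtain ⟨t, ht, hmt⟩ := Finset.mem_biUnion.1 hm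
  obtain ⟨-, -, h1, h2, -, -⟩ := mem_subFilter.1 ht
  have := Kset_subset E t hmt
  simp only [Finset.mem_Ico] at this ⊢
  omega

lemma xE_eq_Kset {n : ℕ} {a : ℕ → ℕ} {E : Finset (ℕ × ℕ)} {x : ℕ × ℕ → ℝ}
    (hE : Rp n E) (hx : IsXE n a E x) :
    ∀ (N : ℕ) (s : ℕ × ℕ), s ∈ E → s.2 - s.1 ≤ N →
      x s = ∑ m ∈ Kset E s, (a m : ℝ) := by
  intro N
  induction N with
  | zero => intro s hs hN; have := (hE.1 s hs).2.1; omega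
  | succ N ih =>
    intro s hs hN
    obtain ⟨i, j⟩ := s
    have hij : i < j := (hE.1 _ hs).2.1
    have hook := hx.2 _ hs
    simp only at hook
    rw [Sval_dseg hij] at hook
    classical
    have hsum : ∑ t ∈ subFilter E (i,j), x t
        = (∑ k ∈ Finset.Ico (i+1) j, x (i, k)) + ∑ l ∈ Finset.Ico (i+1) j, x (l, j) := by
      rw [← Finset.sum_filter_add_sum_filter_not (subFilter E (i,j)) (fun t => t.1 = i)]
      congr 1
      · -- left part
        rw [show ∑ k ∈ Finset.Ico (i+1) j, x (i, k)
            = ∑ k ∈ (Finset.Ico (i+1) j).filter (fun k => (i,k) ∈ E), x (i, k) from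
          (Finset.sum_filter_of_ne fun k _ hk => by
            by_contra hmem; exact hk (hx.1 _ hmem)).symm]
        refine Finset.sum_nbij' (fun t => t.2) (fun k => (i, k)) ?_ ?_ ?_ ?_ ?_
        · intro t ht
          obtain ⟨hts, htl⟩ := Finset.mem_filter.1 ht
          obtain ⟨htE, -, h1, h2, hv, hne⟩ := mem_subFilter.1 hts
          simp only [Finset.mem_filter, Finset.mem_Ico]
          have : ¬ (t.1 = i ∧ t.2 = j) := fun ⟨u, v⟩ => hne (Prod.ext u v)
          refine ⟨⟨by omega, by omega⟩, ?_⟩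
          rw [show (i, t.2) = t by rw [← htl]]
          exact htE
        · intro k hk
          obtain ⟨hkI, hkE⟩ := Finset.mem_filter.1 hk
          simp only [Finset.mem_Ico] at hkI
          simp only [Finset.mem_filter]
          refine ⟨mem_subFilter.2 ⟨hkE, Or.inl rfl, le_refl _, by omega, by omega, ?_⟩, trivial⟩
          simp only [ne_eq, Prod.mk.injEq]; omega
        · intro t ht
          obtain ⟨hts, htl⟩ := Finset.mem_filter.1 ht
          show (i, t.2) = t
          rw [← htl]
        · intro k hk; rfl
        · intro t ht
          obtain ⟨hts, htl⟩ := Finset.mem_filter.1 ht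
          rw [show ((i : ℕ), t.2) = t by rw [← htl]]
      · -- right part
        rw [show ∑ l ∈ Finset.Ico (i+1) j, x (l, j)
            = ∑ l ∈ (Finset.Ico (i+1) j).filter (fun l => (l,j) ∈ E), x (l, j) from
          (Finset.sum_filter_of_ne fun l _ hl => by
            by_contra hmem; exact hl (hx.1 _ hmem)).symm]
        refine Finset.sum_nbij' (fun t => t.1) (fun l => (l, j)) ?_ ?_ ?_ ?_ ?_
        · intro t ht
          obtain ⟨hts, htl⟩ := Finset.mem_filter.1 ht
          obtain ⟨htE, he, h1, h2, hv, hne⟩ := mem_subFilter.1 hts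
          have htr : t.2 = j := by
            rcases he with h | h
            · exact absurd h htl
            · exact h
          simp only [Finset.mem_filter, Finset.mem_Ico]
          refine ⟨⟨by omega, by omega⟩, ?_⟩
          rw [show (t.1, j) = t by rw [← htr]]
          exact htE
        · intro l hl
          obtain ⟨hlI, hlE⟩ := Finset.mem_filter.1 hl
          simp only [Finset.mem_Ico] at hlI
          simp only [Finset.mem_filter]
          refine ⟨mem_subFilter.2 ⟨hlE, Or.inr rfl, by omega, le_refl _, by omega, ?_⟩, ?_⟩
          · simp only [ne_eq, Prod.mk.injEq]; omega
          · show ¬ (l = i)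
            omega
        · intro t ht
          obtain ⟨hts, htl⟩ := Finset.mem_filter.1 ht
          obtain ⟨htE, he, h1, h2, hv, hne⟩ := mem_subFilter.1 hts
          have htr : t.2 = j := by
            rcases he with h | h
            · exact absurd h htl
            · exact h
          show (t.1, j) = t
          rw [← htr]
        · intro l hl; rfl
        · intro t ht
          obtain ⟨hts, htl⟩ := Finset.mem_filter.1 ht
          obtain ⟨htE, he, h1, h2, hv, hne⟩ := mem_subFilter.1 hts
          have htr : t.2 = j := by
            rcases he with h | h
            · exact absurd h htl
            · exact h
          rw [show (t.1, (j : ℕ)) = t by rw [← htr]]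
    have hIH : ∑ t ∈ subFilter E (i,j), x t
        = ∑ t ∈ subFilter E (i,j), ∑ m ∈ Kset E t, (a m : ℝ) :=
      Finset.sum_congr rfl fun t ht => ih t (mem_subFilter.1 ht).1 (by
        have h1 : t.2 - t.1 < j - i := subFilter_len ht
        have h2 : j - i ≤ N + 1 := hN
        omega)
    have hbi : ∑ t ∈ subFilter E (i,j), ∑ m ∈ Kset E t, (a m : ℝ)
        = ∑ m ∈ (subFilter E (i,j)).biUnion (Kset E), (a m : ℝ) :=
      (Finset.sum_biUnion (pairwiseDisjoint_subFilter hE (i,j))).symm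
    have hsd : ∑ m ∈ Kset E (i,j), (a m : ℝ)
        + ∑ m ∈ (subFilter E (i,j)).biUnion (Kset E), (a m : ℝ)
        = ∑ m ∈ Finset.Ico i j, (a m : ℝ) := by
      rw [Kset_eq]
      exact Finset.sum_sdiff (biUnion_subFilter_subset (i,j))
    have h1 : x (i, j) + ∑ t ∈ subFilter E (i,j), x t = ∑ m ∈ Finset.Ico i j, (a m : ℝ) := by
      rw [hsum]; linarith [hook]
    rw [hIH, hbi] at h1
    linarith [hsd, h1]

def PRel (p q : ℕ × ℕ) : Prop :=
  p.1 ≤ q.1 ∧ p.2 ≤ q.2 ∧ p.1 + p.2 < q.1 + q.2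

lemma prel_trans {p q r : ℕ × ℕ} (h1 : PRel p q) (h2 : PRel q r) : PRel p r := by
  obtain ⟨a, b, c⟩ := h1; obtain ⟨a', b', c'⟩ := h2
  exact ⟨le_trans a a', le_trans b b', by omega⟩

instance : IsTrans (ℕ × ℕ) PRel := ⟨fun _ _ _ => prel_trans⟩

instance : Trans PRel PRel PRel := ⟨prel_trans⟩

lemma pathStep_prel {p q : ℕ × ℕ} (h : PathStep p q) : PRel p q := by
  rcases h with h | h <;> subst h <;> exact ⟨by simp, by simp, by simp⟩

lemma dyck_pairwise_s6 {d : List (ℕ × ℕ)} (h : List.Chain' PathStep d) : d.Pairwise PRel :=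
  List.isChain_iff_pairwise.1 (List.IsChain.imp (fun _ _ hab => pathStep_prel hab) h)

lemma dyck_nodup_s6 {d : List (ℕ × ℕ)} (h : List.Chain' PathStep d) : d.Nodup :=
  (dyck_pairwise_s6 h).imp fun hr => by
    obtain ⟨-, -, hc⟩ := hr
    intro he; subst he; omega

lemma pairwise_mem_or {α : Type*} {R : α → α → Prop} {l : List α} (h : l.Pairwise R) {x y : α}
    (hx : x ∈ l) (hy : y ∈ l) : x = y ∨ R x y ∨ R y x := by
  induction l with
  | nil => simp at hx
  | cons a t ih =>
    rw [List.pairwise_cons] at h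
    rcases List.mem_cons.1 hx with h1 | h1 <;> rcases List.mem_cons.1 hy with h2 | h2
    · exact Or.inl (h1.trans h2.symm)
    · exact Or.inr (Or.inl (h1 ▸ h.1 y h2))
    · exact Or.inr (Or.inr (h2 ▸ h.1 x h1))
    · exact ih h.2 h1 h2

lemma mem_of_getLast?_eq {α : Type*} {l : List α} {y : α} (h : l.getLast? = some y) :
    y ∈ l := by
  obtain ⟨hne, rfl⟩ := List.mem_getLast?_eq_getLast (Option.mem_def.2 h)
  exact List.getLast_mem hne

lemma prel_getLast? : ∀ {l : List (ℕ × ℕ)}, l.Pairwise PRel → ∀ {y : ℕ × ℕ},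
    l.getLast? = some y → ∀ {x : ℕ × ℕ}, x ∈ l → x = y ∨ PRel x y := by
  intro l
  induction l with
  | nil => intro _ y hy; simp at hy
  | cons a t ih =>
    intro hl y hy x hx
    cases t with
    | nil =>
      have hay : a = y := by simpa using hy
      rcases List.mem_cons.1 hx with h1 | h1
      · exact Or.inl (h1.trans hay)
      · simp at h1
    | cons b t' =>
      rw [List.getLast?_cons_cons] at hy
      rw [List.pairwise_cons] at hl
      rcases List.mem_cons.1 hx with h1 | h1
      · exact Or.inr (h1 ▸ hl.1 y (mem_of_getLast?_eq hy))
      · exact ih hl.2 hy h1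

lemma firsts_mem : ∀ {d : List (ℕ × ℕ)}, List.Chain' PathStep d →
    ∀ {i₁ : ℕ}, d.getLast? = some (i₁, i₁ + 1) → ∀ {s : ℕ × ℕ}, s ∈ d →
    ∀ {k : ℕ}, s.1 ≤ k → k ≤ i₁ → k ∈ d.map Prod.fst := by
  intro d
  induction d with
  | nil => intro _ i₁ h; simp at h
  | cons q rest ih =>
    intro hch i₁ hlast s hs k hk1 hk2
    rcases List.mem_cons.1 hs with rfl | hs'
    · rcases eq_or_lt_of_le hk1 with he | hlt
      · simp [← he]
      · cases rest with
        | nil =>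
          have : s = (i₁, i₁ + 1) := by simpa using hlast
          rw [this] at hlt
          simp at hlt
          omega
        | cons q' rest' =>
          have hstep : PathStep s q' := (List.isChain_cons_cons.1 hch).1
          rw [List.getLast?_cons_cons] at hlast
          have hq'k : q'.1 ≤ k := by
            rcases hstep with h | h <;> rw [h] <;> simp <;> omega
          have := ih (List.IsChain.tail hch) hlast (List.mem_cons_self (a := q') (l := rest')) hq'k hk2
          simpa using Or.inr (by simpa using this)
    · cases rest with
      | nil => simp at hs'
      | cons q' rest' =>
        rw [List.getLast?_cons_cons] at hlast
        have := ih (List.IsChain.tail hch) hlast hs' hk1 hk2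
        simpa using Or.inr (by simpa using this)

lemma before_after {d : List (ℕ × ℕ)} (hch : List.Chain' PathStep d) {i j : ℕ}
    (hp : (i, j) ∈ d) (hq1 : (i, j - 1) ∈ d) (hq2 : (i + 1, j) ∈ d) (hij : i + 1 < j)
    {s : ℕ × ℕ} (hs : s ∈ d) (hne : s ≠ (i, j)) :
    (s.1 ≤ i ∧ s.2 ≤ j - 1) ∨ (i + 1 ≤ s.1 ∧ j ≤ s.2) := by
  have hpw := dyck_pairwise_s6 hch
  rcases pairwise_mem_or hpw hs hp with he | hrel | hrel
  · exact absurd he hne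
  · by_cases h2 : s.2 ≤ j - 1
    · exact Or.inl ⟨hrel.1, h2⟩
    · have hs2 : s.2 = j := by have c : s.2 ≤ j := hrel.2.1; omega
      have hs1 : s.1 < i := by have c : s.1 + s.2 < i + j := hrel.2.2; omega
      rcases pairwise_mem_or hpw hs hq1 with he | hr | hr
      · rw [he] at hs2; simp at hs2; omega
      · have c : s.2 ≤ j - 1 := hr.2.1; omega
      · have c : i ≤ s.1 := hr.1; omega
  · by_cases h1 : i + 1 ≤ s.1
    · exact Or.inr ⟨h1, hrel.2.1⟩
    · have hs1 : s.1 = i := by have c : i ≤ s.1 := hrel.1; omega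
      have hs2 : j < s.2 := by have c : i + j < s.1 + s.2 := hrel.2.2; omega
      rcases pairwise_mem_or hpw hs hq2 with he | hr | hr
      · rw [he] at hs1; simp at hs1
      · have c : s.2 ≤ j := hr.2.1; omega
      · have c : i + 1 ≤ s.1 := hr.1; omega

lemma exists_uncovered {n : ℕ} {E : Finset (ℕ × ℕ)} (hE : Rp n E) {d : List (ℕ × ℕ)}
    (hch : List.Chain' PathStep d)
    {i j : ℕ} (hp : (i, j) ∈ d) (hq1 : (i, j - 1) ∈ d) (hq2 : (i + 1, j) ∈ d)
    (hij : i + 1 < j)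
    (G : Finset (ℕ × ℕ)) (hG : ∀ t ∈ G, t ∈ d ∧ t ∈ E ∧ t ≠ (i, j)) :
    ∃ k ∈ Finset.Ico i j, k ∉ G.biUnion (Kset E) := by
  by_contra hcon
  push_neg at hcon
  have hcov : ∀ k, i ≤ k → k < j → ∃ t ∈ G, k ∈ Kset E t := fun k h1 h2 =>
    Finset.mem_biUnion.1 (hcon k (Finset.mem_Ico.2 ⟨h1, h2⟩))
  have hBA : ∀ t ∈ G, (t.1 ≤ i ∧ t.2 ≤ j - 1) ∨ (i + 1 ≤ t.1 ∧ j ≤ t.2) := fun t ht =>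
    before_after hch hp hq1 hq2 hij (hG t ht).1 (hG t ht).2.2
  classical
  set B := G.filter (fun t => t.2 ≤ j - 1) with hB
  set A := G.filter (fun t => j ≤ t.2) with hA
  obtain ⟨t₀, ht₀, hmt₀⟩ := hcov i le_rfl (by omega)
  have hK₀ := Kset_subset E t₀ hmt₀
  simp only [Finset.mem_Ico] at hK₀
  have ht₀B : t₀ ∈ B := by
    rcases hBA t₀ ht₀ with h | h
    · exact Finset.mem_filter.2 ⟨ht₀, h.2⟩
    · omega
  obtain ⟨t₁, ht₁, hmt₁⟩ := hcov (j - 1) (by omega) (by omega)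
  have hK₁ := Kset_subset E t₁ hmt₁
  simp only [Finset.mem_Ico] at hK₁
  have ht₁A : t₁ ∈ A := by
    rcases hBA t₁ ht₁ with h | h
    · omega
    · exact Finset.mem_filter.2 ⟨ht₁, h.2⟩
  obtain ⟨ts, htsB, hts2⟩ := B.exists_max_image (·.2) ⟨t₀, ht₀B⟩
  obtain ⟨ta, htaA, hta1⟩ := A.exists_min_image (·.1) ⟨t₁, ht₁A⟩
  have htsG : ts ∈ G := (Finset.mem_filter.1 htsB).1
  have htaG : ta ∈ G := (Finset.mem_filter.1 htaA).1
  have htsE : ts ∈ E := (hG ts htsG).2.1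
  have htaE : ta ∈ E := (hG ta htaG).2.1
  have hts_bef : ts.1 ≤ i ∧ ts.2 ≤ j - 1 := by
    rcases hBA ts htsG with h | h
    · exact h
    · have := (Finset.mem_filter.1 htsB).2; omega
  have hta_aft : i + 1 ≤ ta.1 ∧ j ≤ ta.2 := by
    rcases hBA ta htaG with h | h
    · have := (Finset.mem_filter.1 htaA).2; omega
    · exact h
  -- k* : largest k in Ico i j with a witness in B
  set S := (Finset.Ico i j).filter (fun k => ∃ t ∈ B, k ∈ Kset E t) with hS
  have hSne : S.Nonempty := ⟨i, Finset.mem_filter.2 ⟨Finset.mem_Ico.2 ⟨le_rfl, by omega⟩,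
    t₀, ht₀B, hmt₀⟩⟩
  obtain ⟨ks, hksS, hksmax⟩ := S.exists_max_image id hSne
  have hksmem := Finset.mem_filter.1 hksS
  have hksI := hksmem.1
  obtain ⟨tb, htbB, hmtb⟩ := hksmem.2
  have hKb := Kset_subset E tb hmtb
  simp only [Finset.mem_Ico] at hKb hksI
  have htbj : tb.2 ≤ j - 1 := (Finset.mem_filter.1 htbB).2
  obtain ⟨tc, htcG, hmtc⟩ := hcov (ks + 1) (by omega) (by omega)
  have hKc := Kset_subset E tc hmtc
  simp only [Finset.mem_Ico] at hKc
  have htcA : tc ∈ A := by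
    rcases hBA tc htcG with h | h
    · exfalso
      have : ks + 1 ∈ S := Finset.mem_filter.2 ⟨Finset.mem_Ico.2 ⟨by omega, by omega⟩,
        tc, Finset.mem_filter.2 ⟨htcG, h.2⟩, hmtc⟩
      have := hksmax _ this
      simp only [id] at this
      omega
    · exact Finset.mem_filter.2 ⟨htcG, h.2⟩
  have hw1 : ta.1 ≤ ks + 1 := le_trans (hta1 tc htcA) hKc.1
  have he1 : ks + 1 ≤ ts.2 := le_trans (by omega) (hts2 tb htbB)
  -- r = (ta.1, ts.2) ∈ E
  have hrE : (ta.1, ts.2) ∈ E ∧ ta.1 < ts.2 := by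
    have h := hE.2 ta htaE ts htsE (by
      have : max ta.1 ts.1 = ta.1 := by omega
      have h2 : min ta.2 ts.2 = ts.2 := by omega
      omega)
    have e : (max ta.1 ts.1, min ta.2 ts.2) = (ta.1, ts.2) := by
      simp only [Prod.mk.injEq]; constructor <;> omega
    rw [e] at h
    refine ⟨h.2, ?_⟩
    have := h.1
    omega
  obtain ⟨m, hm⟩ := Kset_nonempty hE (ts.2 - ta.1) (ta.1, ts.2) hrE.1 le_rfl
  have hmI := Kset_subset _ _ hm
  simp only [Finset.mem_Ico] at hmI
  obtain ⟨s, hsG, hms⟩ := hcov m (by omega) (by omega)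
  have hsE : s ∈ E := (hG s hsG).2.1
  have hKs := Kset_subset E s hms
  simp only [Finset.mem_Ico] at hKs
  rcases hBA s hsG with ⟨h1, h2⟩ | ⟨h1, h2⟩
  · -- s before the peak
    have hsB : s ∈ B := Finset.mem_filter.2 ⟨hsG, h2⟩
    have hse : s.2 ≤ ts.2 := hts2 s hsB
    rcases eq_or_lt_of_le hse with he | hlt
    · have hsub : (ta.1, ts.2) ∈ subFilter E s := by
        rw [mem_subFilter]
        refine ⟨hrE.1, Or.inr he.symm, by omega, by omega, hrE.2, ?_⟩
        simp only [ne_eq, Prod.ext_iff, not_and]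
        intro hx; omega
      exact Kset_disj_sub hsub hm hms
    · exact Kset_disj_overlap hE (u := s.1) (v := s.2) (u' := ta.1) (v' := ts.2)
        (by rw [Prod.mk.eta]; exact hsE) hrE.1 (by omega) hlt (by omega)
        (by rw [Prod.mk.eta]; exact hms) hm
  · -- s after the peak
    have hsA : s ∈ A := Finset.mem_filter.2 ⟨hsG, h2⟩
    have hsw : ta.1 ≤ s.1 := hta1 s hsA
    rcases eq_or_lt_of_le hsw with he | hlt
    · have hsub : (ta.1, ts.2) ∈ subFilter E s := by
        rw [mem_subFilter]
        refine ⟨hrE.1, Or.inl he, by omega, by omega, hrE.2, ?_⟩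
        simp only [ne_eq, Prod.ext_iff, not_and]
        intro hx; omega
      exact Kset_disj_sub hsub hm hms
    · exact Kset_disj_overlap hE (u := ta.1) (v := ts.2) (u' := s.1) (v' := s.2)
        hrE.1 (by rw [Prod.mk.eta]; exact hsE) hlt (by omega) (by omega)
        hm (by rw [Prod.mk.eta]; exact hms)

lemma nodup_toFinset_sum {l : List (ℕ × ℕ)} (h : l.Nodup) (f : ℕ × ℕ → ℝ) :
    ∑ t ∈ l.toFinset, f t = (l.map f).sum := by
  induction l with
  | nil => simp
  | cons a t ih =>
    rw [List.toFinset_cons, List.map_cons, List.sum_cons,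
      Finset.sum_insert (by simp only [List.mem_toFinset]; exact (List.nodup_cons.1 h).1),
      ih (List.nodup_cons.1 h).2]

/-- Lemma `super`: for `E ∈ R_p` and a Dyck path `d` with peak `(i,j)`,
`S(x(E),d) - x(E)_{i,j} ≤ M(λ,d)`, strictly so if `λ` is regular. -/
theorem peak_removal_inequality (n : ℕ) (hn : 2 ≤ n) (a : ℕ → ℕ)
    (E : Finset (ℕ × ℕ)) (hE : Rp n E) (x : ℕ × ℕ → ℝ) (hx : IsXE n a E x)
    (d : List (ℕ × ℕ)) (hd : IsDyckPath n d) (p : ℕ × ℕ) (hp : IsPeak d p) :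
    Sval x d - x p ≤ (Mval a d : ℝ) ∧
      ((∀ i ∈ Finset.Icc 1 (n - 1), 0 < a i) → Sval x d - x p < (Mval a d : ℝ)) := by
  classical
  obtain ⟨i, j⟩ := p
  obtain ⟨hpd, hq1, hq2⟩ := hp
  simp only at hq1 hq2
  have hch := hd.2.2.2.2
  have hval := hd.2.1
  obtain ⟨i₁, hlast⟩ := hd.2.2.2.1
  have hvp := hval _ hpd
  have hvq2 := hval _ hq2
  have hij : i + 1 < j := hvq2.2.1
  have hi1 : 1 ≤ i := hvp.1
  have hjn : j ≤ n := hvp.2.2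
  have hnodup := dyck_nodup_s6 hch
  -- rewrite Sval as a Finset sum
  have hSval : Sval x d = ∑ t ∈ d.toFinset, x t := (nodup_toFinset_sum hnodup x).symm
  set F := d.toFinset.filter (· ∈ E) with hF
  have hFsum : ∑ t ∈ d.toFinset, x t = ∑ t ∈ F, x t :=
    (Finset.sum_filter_of_ne fun t _ hxt => by
      by_contra h; exact hxt (hx.1 t h)).symm
  set G := F.erase (i, j) with hG
  have hGd : ∀ t ∈ G, t ∈ d ∧ t ∈ E ∧ t ≠ (i, j) := by
    intro t ht
    have h1 := Finset.mem_of_mem_erase ht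
    have h2 := Finset.ne_of_mem_erase ht
    have h3 := Finset.mem_filter.1 h1
    exact ⟨List.mem_toFinset.1 h3.1, h3.2, h2⟩
  have hGsum : Sval x d - x (i, j) = ∑ t ∈ G, x t := by
    by_cases hpE : (i, j) ∈ E
    · have hpF : (i, j) ∈ F :=
        Finset.mem_filter.2 ⟨List.mem_toFinset.2 hpd, hpE⟩
      have := Finset.add_sum_erase F x hpF
      rw [hSval, hFsum, ← this, ← hG]
      ring
    · have hpF : (i, j) ∉ F := fun h => hpE (Finset.mem_filter.1 h).2
      rw [hSval, hFsum, hG, Finset.erase_eq_of_notMem hpF, hx.1 _ hpE]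
      ring
  -- express as sum over the union of K-sets
  have hxt : ∀ t ∈ G, x t = ∑ m ∈ Kset E t, (a m : ℝ) := fun t ht =>
    xE_eq_Kset hE hx (t.2 - t.1) t (hGd t ht).2.1 le_rfl
  have hdisj : (↑G : Set (ℕ × ℕ)).PairwiseDisjoint (Kset E) := by
    intro t ht t' ht' hne
    simp only [Finset.mem_coe] at ht ht'
    obtain ⟨htd, htE, -⟩ := hGd t ht
    obtain ⟨ht'd, ht'E, -⟩ := hGd t' ht'
    simp only [Function.onFun]
    rw [Finset.disjoint_left]
    intro m hm hm'
    rcases pairwise_mem_or (dyck_pairwise_s6 hch) htd ht'd with he | hr | hr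
    · exact hne he
    · exact Kset_disj_pair hE htE ht'E hne hr.1 hr.2.1 hm hm'
    · exact Kset_disj_pair hE ht'E htE (Ne.symm hne) hr.1 hr.2.1 hm' hm
  set U := G.biUnion (Kset E) with hU
  have hUsum : ∑ t ∈ G, x t = ∑ m ∈ U, (a m : ℝ) := by
    rw [Finset.sum_congr rfl hxt, hU, Finset.sum_biUnion hdisj]
  -- U is contained in the first coordinates of d
  have hsecond : ∀ t ∈ d, t.2 ≤ i₁ + 1 := by
    intro t ht
    rcases prel_getLast? (dyck_pairwise_s6 hch) hlast ht with he | hr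
    · rw [he]
    · exact hr.2.1
  have hfirsts : ∀ t ∈ d, ∀ k, t.1 ≤ k → k < t.2 → k ∈ (d.map Prod.fst).toFinset := by
    intro t ht k h1 h2
    have h3 : k ≤ i₁ := by have := hsecond t ht; omega
    exact List.mem_toFinset.2 (firsts_mem hch hlast ht h1 h3)
  have hUfirsts : U ⊆ (d.map Prod.fst).toFinset := by
    intro m hm
    obtain ⟨t, ht, hmt⟩ := Finset.mem_biUnion.1 hm
    have hKt := Kset_subset E t hmt
    simp only [Finset.mem_Ico] at hKt
    exact hfirsts t (hGd t ht).1 m hKt.1 hKt.2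
  have hMval : (Mval a d : ℝ) = ∑ m ∈ (d.map Prod.fst).toFinset, (a m : ℝ) := by
    rw [Mval, Nat.cast_sum]
  constructor
  · rw [hGsum, hUsum, hMval]
    exact Finset.sum_le_sum_of_subset_of_nonneg hUfirsts
      (fun m _ _ => by positivity)
  · intro hreg
    obtain ⟨kbar, hkI, hkU⟩ := exists_uncovered hE hch hpd hq1 hq2 hij G hGd
    simp only [Finset.mem_Ico] at hkI
    have hkf : kbar ∈ (d.map Prod.fst).toFinset := hfirsts (i, j) hpd kbar hkI.1 hkI.2
    have hkpos : 0 < a kbar := hreg kbar (Finset.mem_Icc.2 ⟨by omega, by omega⟩)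
    rw [hGsum, hUsum, hMval]
    exact Finset.sum_lt_sum_of_subset hUfirsts hkf hkU (by positivity)
      (fun m _ _ => by positivity)
end

section
/- For every E ∈ R_p and every 1 ≤ k ≤ n one has μ(x(E))_k = λ_{w(E)^{−1}(k)}; that is, the vector μ(x(E)) ∈ ℝ^n is obtained from (λ_1, …, λ_n) by applying the permutation w(E). -/
open Finset

/-- A list of segments sorted so that longer segments come first
(hence shorter transpositions are applied first in the product). -/
def SortedByLength (l : List (ℕ × ℕ)) : Prop :=
  List.Pairwise (fun p q => q.2 - q.1 ≤ p.2 - p.1) l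

/-- The product of the transpositions `(i j)` over a list of segments `[i,j]`. -/
def segSwapProd (l : List (ℕ × ℕ)) : Equiv.Perm ℕ :=
  (l.map fun p => Equiv.swap p.1 p.2).prod

/-- `λ_k = a_k + a_{k+1} + … + a_{n-1}` (and `λ_n = 0`). -/
def lamwt (n : ℕ) (a : ℕ → ℕ) (k : ℕ) : ℕ :=
  ∑ t ∈ Finset.Ico k n, a t

lemma list_range_sum (N : ℕ) (f : ℕ → ℝ) :
    ((List.range N).map f).sum = ∑ t ∈ Finset.range N, f t := by
  induction N with
  | zero => simp
  | succ n ih => simp [List.range_succ, Finset.sum_range_succ, ih]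

lemma mem_dseg {p : ℕ × ℕ} {i j : ℕ} (h : p ∈ dseg i j) :
    i ≤ p.1 ∧ p.1 < p.2 ∧ p.2 ≤ j := by
  simp only [dseg, List.mem_append, List.mem_map, List.mem_range] at h
  rcases h with ⟨t, ht, rfl⟩ | ⟨t, ht, rfl⟩ <;> simp <;> omega

lemma sval_dseg (x : ℕ × ℕ → ℝ) (i j : ℕ) :
    Sval x (dseg i j) =
      (∑ m ∈ Finset.Ico (i+1) (j+1), x (i, m)) + ∑ m ∈ Finset.Ico (i+1) j, x (m, j) := by
  have h1 : j + 1 - (i + 1) = j - i := by omega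
  have h2 : j - (i + 1) = j - i - 1 := by omega
  rw [Finset.sum_Ico_eq_sum_range, Finset.sum_Ico_eq_sum_range, h1, h2]
  simp only [Sval, dseg, List.map_append, List.sum_append, List.map_map]
  rw [show ((List.range (j-i)).map (x ∘ fun t => (i, i + 1 + t))).sum
      = ((List.range (j-i)).map (fun t => x (i, i + 1 + t))).sum from rfl]
  rw [show ((List.range (j-i-1)).map (x ∘ fun t => (i + 1 + t, j))).sum
      = ((List.range (j-i-1)).map (fun t => x (i + 1 + t, j))).sum from rfl]
  rw [list_range_sum, list_range_sum]

lemma lamwt_split {n i j : ℕ} (a : ℕ → ℕ) (hij : i ≤ j) (hjn : j ≤ n) :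
    (lamwt n a i : ℝ) = (∑ t ∈ Finset.Ico i j, (a t : ℝ)) + lamwt n a j := by
  unfold lamwt
  push_cast
  rw [Finset.sum_Ico_consecutive _ hij hjn]

lemma weight_aux (n : ℕ) (a : ℕ → ℕ) (l : List (ℕ × ℕ)) :
    ∀ (E : Finset (ℕ × ℕ)) (x : ℕ × ℕ → ℝ), Rp n E → IsXE n a E x →
      l.Nodup → (∀ p, p ∈ l ↔ p ∈ E) → SortedByLength l →
      ∀ k, 1 ≤ k → k ≤ n →
      (lamwt n a k : ℝ) - (∑ j ∈ Finset.Icc (k + 1) n, x (k, j)) +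
          ∑ i ∈ Finset.Ico 1 k, x (i, k) = (lamwt n a ((segSwapProd l)⁻¹ k) : ℝ) := by
  induction l with
  | nil =>
    intro E x hE hx _ hmem _ k hk1 hkn
    have hx0 : ∀ p, x p = 0 := fun p => hx.1 p (fun h => by simpa using (hmem p).2 h)
    simp [segSwapProd, hx0]
  | cons s l' ih =>
    intro E x hE hx hnd hmem hsort k hk1 hkn
    have hsE : s ∈ E := (hmem s).1 (List.mem_cons_self (a := s) (l := l'))
    obtain ⟨hs1, hs12, hs2n⟩ := hE.1 s hsE
    have hsortc : List.Pairwise (fun p q : ℕ × ℕ => q.2 - q.1 ≤ p.2 - p.1) (s :: l') := hsort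
    have hsort' := List.pairwise_cons.mp hsortc
    have hlong : ∀ t ∈ E, t.2 - t.1 ≤ s.2 - s.1 := by
      intro t ht
      rcases List.mem_cons.mp ((hmem t).2 ht) with rfl | h
      · exact le_refl _
      · exact hsort'.1 t h
    -- segments touching s at one endpoint or strictly longer than s cannot be in E
    have f1 : ∀ m, m < s.1 → (m, s.1) ∉ E := by
      intro m hm hmE
      have := (hE.2 (m, s.1) hmE s hsE (by dsimp only; omega)).1
      dsimp only at this; omega
    have f2 : ∀ m, s.2 < m → (s.2, m) ∉ E := by
      intro m hm hmE
      have := (hE.2 s hsE (s.2, m) hmE (by dsimp only; omega)).1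
      dsimp only at this; omega
    have f3 : ∀ m, s.2 < m → (s.1, m) ∉ E := by
      intro m hm hmE
      have := hlong _ hmE
      dsimp only at this; omega
    have f4 : ∀ m, m < s.1 → (m, s.2) ∉ E := by
      intro m hm hmE
      have := hlong _ hmE
      dsimp only at this; omega
    set E' := E.erase s with hE'def
    set x' : ℕ × ℕ → ℝ := fun p => if p = s then 0 else x p with hx'def
    have hx'ne : ∀ p, p ≠ s → x' p = x p := fun p hp => if_neg hp
    have hx's : x' s = 0 := if_pos rfl
    have hx'eq : ∀ p, x' p = x p - (if p = s then x s else 0) := by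
      intro p
      by_cases h : p = s
      · subst h; simp [hx's]
      · simp [hx'ne p h, h]
    have hmem' : ∀ p, p ∈ l' ↔ p ∈ E' := by
      intro p
      constructor
      · intro hp
        refine Finset.mem_erase.mpr ⟨?_, (hmem p).1 (List.mem_cons_of_mem _ hp)⟩
        rintro rfl; exact (List.nodup_cons.mp hnd).1 hp
      · intro hp
        rcases List.mem_cons.mp ((hmem p).2 (Finset.mem_erase.mp hp).2) with rfl | h
        · exact absurd rfl (Finset.mem_erase.mp hp).1
        · exact h
    have hE' : Rp n E' := by
      constructor
      · exact fun p hp => hE.1 p (Finset.mem_erase.mp hp).2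
      · intro p hp q hq hcond
        obtain ⟨hlt, hin⟩ := hE.2 p (Finset.mem_erase.mp hp).2 q (Finset.mem_erase.mp hq).2 hcond
        refine ⟨hlt, Finset.mem_erase.mpr ⟨?_, hin⟩⟩
        intro hcontra
        have hc1 : max p.1 q.1 = s.1 := congrArg Prod.fst hcontra
        have hc2 : min p.2 q.2 = s.2 := congrArg Prod.snd hcontra
        obtain ⟨_, hplt, _⟩ := hE.1 p (Finset.mem_erase.mp hp).2
        have h2 := hlong p (Finset.mem_erase.mp hp).2
        exact (Finset.mem_erase.mp hp).1 (Prod.ext (by omega) (by omega))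
    have hxE' : IsXE n a E' x' := by
      constructor
      · intro p hp
        by_cases hps : p = s
        · rw [hps]; exact hx's
        · rw [hx'ne p hps]; exact hx.1 p (fun hpe => hp (Finset.mem_erase.mpr ⟨hps, hpe⟩))
      · intro p hp
        have hsval : Sval x' (dseg p.1 p.2) = Sval x (dseg p.1 p.2) := by
          unfold Sval
          congr 1
          apply List.map_congr_left
          intro q hq
          apply hx'ne
          rintro rfl
          obtain ⟨h1, h2, h3⟩ := mem_dseg hq
          obtain ⟨_, hplt, _⟩ := hE.1 p (Finset.mem_erase.mp hp).2
          have h4 := hlong p (Finset.mem_erase.mp hp).2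
          exact (Finset.mem_erase.mp hp).1 (Prod.ext (by omega) (by omega))
        rw [hsval]
        exact hx.2 p (Finset.mem_erase.mp hp).2
    have hw : ∀ m, (segSwapProd (s :: l'))⁻¹ m = (segSwapProd l')⁻¹ (Equiv.swap s.1 s.2 m) := by
      intro m
      simp [segSwapProd, List.map_cons, List.prod_cons, mul_inv_rev, Equiv.Perm.mul_apply]
    -- key sum identity from the defining constraint at s
    have hkey : (∑ m ∈ Finset.Ico (s.1+1) (s.2+1), x (s.1, m))
        + (∑ m ∈ Finset.Ico (s.1+1) s.2, x (m, s.2))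
        = (lamwt n a s.1 : ℝ) - lamwt n a s.2 := by
      rw [← sval_dseg, hx.2 s hsE, lamwt_split a (le_of_lt hs12) hs2n]
      ring
    have hsum_ite : ∀ (T : Finset ℕ) (g : ℕ → ℕ × ℕ) (b : ℕ), (∀ m, g m = s ↔ m = b) →
        (∑ m ∈ T, (if g m = s then x s else 0)) = if b ∈ T then x s else 0 := by
      intro T g b hg
      have : ∀ m ∈ T, (if g m = s then x s else 0) = (if m = b then x s else 0) := by
        intro m _; simp only [hg]
      rw [Finset.sum_congr rfl this]
      exact Finset.sum_ite_eq' T b fun _ => x s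
    -- x-sums at s.1 and s.2
    have hA : ∑ j' ∈ Finset.Icc (s.1+1) n, x (s.1, j')
        = ∑ m ∈ Finset.Ico (s.1+1) (s.2+1), x (s.1, m) := by
      rw [← Finset.Ico_add_one_right_eq_Icc,
        ← Finset.sum_Ico_consecutive (fun m => x (s.1, m))
          (show s.1+1 ≤ s.2+1 by omega) (show s.2+1 ≤ n+1 by omega)]
      have : ∑ m ∈ Finset.Ico (s.2+1) (n+1), x (s.1, m) = 0 :=
        Finset.sum_eq_zero fun m hm =>
          hx.1 _ (f3 m (by have := Finset.mem_Ico.mp hm; omega))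
      rw [this, add_zero]
    have hB : ∑ i' ∈ Finset.Ico 1 s.1, x (i', s.1) = 0 :=
      Finset.sum_eq_zero fun m hm =>
        hx.1 _ (f1 m (by have := Finset.mem_Ico.mp hm; omega))
    have hC : ∑ j' ∈ Finset.Icc (s.2+1) n, x (s.2, j') = 0 :=
      Finset.sum_eq_zero fun m hm =>
        hx.1 _ (f2 m (by have := Finset.mem_Icc.mp hm; omega))
    have hD : ∑ i' ∈ Finset.Ico 1 s.2, x (i', s.2)
        = x s + ∑ m ∈ Finset.Ico (s.1+1) s.2, x (m, s.2) := by
      rw [← Finset.sum_Ico_consecutive (fun m => x (m, s.2))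
          (show 1 ≤ s.1+1 by omega) (show s.1+1 ≤ s.2 by omega)]
      congr 1
      rw [Finset.sum_eq_single_of_mem s.1 (Finset.mem_Ico.mpr (by omega))
        (fun b hb hbne => hx.1 _ (f4 b (by have := Finset.mem_Ico.mp hb; omega)))]
    -- x'-sums
    have hA' : ∑ j' ∈ Finset.Icc (s.1+1) n, x' (s.1, j')
        = (∑ m ∈ Finset.Ico (s.1+1) (s.2+1), x (s.1, m)) - x s := by
      rw [Finset.sum_congr rfl (fun j' _ => hx'eq (s.1, j')), Finset.sum_sub_distrib, hA]
      congr 1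
      rw [hsum_ite _ (fun j' => (s.1, j')) s.2
        (by intro m; constructor
            · intro h; exact congrArg Prod.snd h
            · rintro rfl; exact Prod.mk.eta)]
      rw [if_pos (Finset.mem_Icc.mpr (by omega))]
    have hB' : ∑ i' ∈ Finset.Ico 1 s.1, x' (i', s.1) = 0 := by
      rw [Finset.sum_congr rfl (fun i' hi' => hx'ne (i', s.1)
        (fun h => by have := congrArg Prod.snd h; dsimp only at this; omega))]
      exact hB
    have hC' : ∑ j' ∈ Finset.Icc (s.2+1) n, x' (s.2, j') = 0 := by
      rw [Finset.sum_congr rfl (fun j' hj' => hx'ne (s.2, j')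
        (fun h => by have := congrArg Prod.fst h; dsimp only at this; omega))]
      exact hC
    have hD' : ∑ i' ∈ Finset.Ico 1 s.2, x' (i', s.2)
        = ∑ m ∈ Finset.Ico (s.1+1) s.2, x (m, s.2) := by
      rw [Finset.sum_congr rfl (fun i' _ => hx'eq (i', s.2)), Finset.sum_sub_distrib, hD]
      rw [hsum_ite _ (fun i' => (i', s.2)) s.1
        (by intro m; constructor
            · intro h; exact congrArg Prod.fst h
            · rintro rfl; exact Prod.mk.eta)]
      rw [if_pos (Finset.mem_Ico.mpr (by omega))]
      ring
    have ihm := ih E' x' hE' hxE' (List.nodup_cons.mp hnd).2 hmem' hsort'.2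
    by_cases hki : k = s.1
    · subst hki
      rw [hw, Equiv.swap_apply_left, ← ihm s.2 (by omega) hs2n, hA, hB, hC', hD']
      have := hkey
      linarith
    · by_cases hkj : k = s.2
      · subst hkj
        rw [hw, Equiv.swap_apply_right, ← ihm s.1 hs1 (by omega), hA', hB', hC, hD]
        have := hkey
        linarith
      · rw [hw, Equiv.swap_apply_of_ne_of_ne hki hkj, ← ihm k hk1 hkn]
        congr 1
        · congr 1
          exact Finset.sum_congr rfl (fun j' _ => (hx'ne (k, j')
            (fun h => hki (congrArg Prod.fst h))).symm)
        · exact Finset.sum_congr rfl (fun i' _ => (hx'ne (i', k)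
            (fun h => hkj (congrArg Prod.snd h))).symm)

/-- `μ(x(E))_k = λ_{w(E)⁻¹(k)}` for all `1 ≤ k ≤ n`. -/
theorem weight_of_xE (n : ℕ) (hn : 2 ≤ n) (a : ℕ → ℕ)
    (E : Finset (ℕ × ℕ)) (hE : Rp n E) (x : ℕ × ℕ → ℝ) (hx : IsXE n a E x)
    (l : List (ℕ × ℕ)) (hnd : l.Nodup) (hmem : ∀ p, p ∈ l ↔ p ∈ E)
    (hsort : SortedByLength l) (k : ℕ) (hk : k ∈ Finset.Icc 1 n) :
    (lamwt n a k : ℝ) - (∑ j ∈ Finset.Icc (k + 1) n, x (k, j)) +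
        ∑ i ∈ Finset.Ico 1 k, x (i, k) =
      (lamwt n a ((segSwapProd l)⁻¹ k) : ℝ) := by
  obtain ⟨h1, h2⟩ := Finset.mem_Icc.mp hk
  exact weight_aux n a l E x hE hx hnd hmem hsort k h1 h2
end
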